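/- arXiv:math/0408035 — 9 statements merged into one kernel-verified Lean document; each statement's English description precedes it below -/
import Mathlib

section
/- Let G be a group and p, q, r ∈ G be elements such that the product pqr commutes with p and with r (hence also with q). For α ∈ ℤ set r(α) = p^α r p^{−α}; for β ≥ 0 set π(α,β) = r(α) r(α+1) ⋯ r(α+β−1) (the empty product being 1), and for β < 0 set π(α,β) = r(α−1)^{−1} r(α−2)^{−1} ⋯ r(α+β)^{−1}; set u(α,β) = π(α,β) · π(0,β)^{−1}. Then for all α, β ∈ ℤ one has (i) p^α q^{−β} p^{−α} q^{β} = u(α,β), and (ii) (p^α q^{−β}) r (p^α q^{−β})^{−1} = π(α,β) · r(α+β) · π(α,β)^{−1}. -/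
/-- For `β ≥ 0`, `pik x α β = x(α) x(α+1) ⋯ x(α+β−1)` (empty product being `1`);
for `β < 0`, `pik x α β = x(α−1)⁻¹ x(α−2)⁻¹ ⋯ x(α+β)⁻¹`. -/
def pik {G : Type*} [Group G] (x : ℤ → G) (α β : ℤ) : G :=
  if 0 ≤ β then ((List.range β.toNat).map (fun k => x (α + k))).prod
  else (((List.range (-β).toNat).map (fun k => x (α + β + k))).prod)⁻¹

/-- `u(α,β) = π(α,β) · π(0,β)⁻¹`. -/
def uu {G : Type*} [Group G] (x : ℤ → G) (α β : ℤ) : G :=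
  pik x α β * (pik x 0 β)⁻¹

lemma fm_aux (l : List ℕ) (g : ℕ → ℤ) : (l.flatMap fun a => [g a]) = l.map g := by
  induction l with
  | nil => simp
  | cons a l ih => simp [List.flatMap_cons] at *; exact ih


lemma pik_of_nonneg {G : Type*} [Group G] (x : ℤ → G) (α β : ℤ) (h : 0 ≤ β) :
    pik x α β = ((List.range β.toNat).map (fun k : ℕ => x (α + (k:ℤ)))).prod := by
  rw [pik, if_pos h]
  show (List.map _ ((List.range β.toNat).flatMap fun a => [((a:ℕ):ℤ)])).prod = _
  rw [fm_aux, List.map_map]; rfl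

lemma pik_of_neg {G : Type*} [Group G] (x : ℤ → G) (α β : ℤ) (h : β < 0) :
    pik x α β = (((List.range (-β).toNat).map (fun k : ℕ => x (α + β + (k:ℤ)))).prod)⁻¹ := by
  rw [pik, if_neg (by omega)]
  show ((List.map _ ((List.range (-β).toNat).flatMap fun a => [((a:ℕ):ℤ)])).prod)⁻¹ = _
  rw [fm_aux, List.map_map]; rfl

lemma pik_zero {G : Type*} [Group G] (x : ℤ → G) (α : ℤ) : pik x α 0 = 1 := by
  simp [pik_of_nonneg x α 0 le_rfl]

lemma pik_succ {G : Type*} [Group G] (x : ℤ → G) (α β : ℤ) :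
    pik x α (β + 1) = pik x α β * x (α + β) := by
  rcases le_or_gt 0 β with h | h
  · rw [pik_of_nonneg x α β h, pik_of_nonneg x α (β+1) (by omega)]
    have h1 : (β+1).toNat = β.toNat + 1 := by omega
    have h2 : (β.toNat : ℤ) = β := by omega
    rw [h1, List.range_succ, List.map_append, List.prod_append]
    simp [h2]
  rcases eq_or_lt_of_le (by omega : β + 1 ≤ 0) with h0 | h0
  · rw [h0, pik_zero, pik_of_neg x α β h]
    have h1 : (-β).toNat = 1 := by omega
    have h2 : β = -1 := by omega
    subst h2
    rw [h1, show List.range 1 = [0] from rfl]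
    simp
  · rw [pik_of_neg x α β h, pik_of_neg x α (β+1) (by omega)]
    have h1 : (-β).toNat = (-(β+1)).toNat + 1 := by omega
    rw [h1, List.range_succ_eq_map, List.map_cons, List.prod_cons, List.map_map, mul_inv_rev]
    simp only [Function.comp_def, Nat.cast_succ]
    rw [show (fun k : ℕ => x (α + β + ((k:ℤ) + 1))) = (fun k : ℕ => x (α + (β+1) + (k:ℤ))) from
      funext fun k => by congr 1; ring]
    simp

lemma pik_pred {G : Type*} [Group G] (x : ℤ → G) (α β : ℤ) :
    pik x α (β - 1) = pik x α β * (x (α + β - 1))⁻¹ := by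
  have h := pik_succ x α (β - 1)
  rw [sub_add_cancel] at h
  rw [h]
  group

section Main
variable {G : Type*} [Group G]

lemma hx_conj (p r : G) (γ δ : ℤ) :
    p ^ γ * (p ^ δ * r * p ^ (-δ)) * p ^ (-γ) = p ^ (γ + δ) * r * p ^ (-(γ + δ)) := by
  group

lemma pik_commute {z : G} (x : ℤ → G) (hzx : ∀ γ, Commute z (x γ)) (α β : ℤ) :
    Commute z (pik x α β) := by
  induction β using Int.induction_on with
  | zero => rw [pik_zero]; exact Commute.one_right z
  | succ i ih => rw [pik_succ]; exact ih.mul_right (hzx _)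
  | pred i ih =>
      rw [show (-(i:ℤ) - 1) = (-(i:ℤ)) - 1 from rfl, pik_pred]
      exact ih.mul_right (hzx _).inv_right

lemma pik_conj (p r : G) (γ α β : ℤ) :
    p ^ γ * pik (fun δ => p ^ δ * r * p ^ (-δ)) α β * p ^ (-γ)
      = pik (fun δ => p ^ δ * r * p ^ (-δ)) (γ + α) β := by
  have e : ∀ A B : G, p^γ * (A*B) * p^(-γ) = (p^γ*A*p^(-γ)) * (p^γ*B*p^(-γ)) := by
    intros; group
  have einv : ∀ A B : G, p^γ * (A*B⁻¹) * p^(-γ) = (p^γ*A*p^(-γ)) * (p^γ*B*p^(-γ))⁻¹ := by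
    intros; group
  induction β using Int.induction_on with
  | zero => rw [pik_zero, pik_zero]; group
  | succ i ih =>
      simp only [pik_succ]
      rw [e, ih, hx_conj, show γ + (α + i) = γ + α + i by ring]
  | pred i ih =>
      simp only [pik_pred]
      rw [einv, ih, hx_conj, show γ + (α + -(i:ℤ) - 1) = γ + α + -(i:ℤ) - 1 by ring]

end Main

section Key
variable {G : Type*} [Group G]

lemma hkey (p q r : G) (hp : Commute (p * q * r) p) (hr : Commute (p * q * r) r) (β : ℤ) :
    q ^ (-β) = (p * q * r) ^ (-β) * pik (fun δ => p ^ δ * r * p ^ (-δ)) 0 β * p ^ β := by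
  set z := p * q * r with hzdef
  have hcP : ∀ β' : ℤ, Commute z (pik (fun δ => p ^ δ * r * p ^ (-δ)) 0 β') :=
    pik_commute (fun δ => p ^ δ * r * p ^ (-δ)) (fun γ => ((hp.zpow_right γ).mul_right hr).mul_right (hp.zpow_right (-γ))) 0
  induction β using Int.induction_on with
  | zero => simp [pik_zero]
  | succ i ih =>
      have e1 : q ^ (-((i:ℤ)+1)) = q ^ (-(i:ℤ)) * q⁻¹ := by
        rw [show -((i:ℤ)+1) = -(i:ℤ) + (-1) by ring, zpow_add, zpow_neg_one]
      have hq' : q⁻¹ = r * z⁻¹ * p := by rw [hzdef]; group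
      rw [e1, ih, hq']
      simp only [pik_succ]
      set P := pik (fun δ => p ^ δ * r * p ^ (-δ)) 0 (i:ℤ) with hP
      have hA : Commute (p ^ (i:ℤ) * r) z⁻¹ := ((hp.zpow_right i).mul_right hr).symm.inv_right
      have hB : P * z⁻¹ = z⁻¹ * P := ((hcP i).inv_left.symm).eq
      calc z ^ (-(i:ℤ)) * P * p ^ (i:ℤ) * (r * z⁻¹ * p)
          = z ^ (-(i:ℤ)) * (P * ((p ^ (i:ℤ) * r) * (z⁻¹ * p))) := by group
        _ = z ^ (-(i:ℤ)) * (P * (z⁻¹ * ((p ^ (i:ℤ) * r) * p))) := by rw [hA.left_comm]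
        _ = z ^ (-(i:ℤ)) * ((P * z⁻¹) * ((p ^ (i:ℤ) * r) * p)) := by group
        _ = z ^ (-(i:ℤ)) * ((z⁻¹ * P) * ((p ^ (i:ℤ) * r) * p)) := by rw [hB]
        _ = z ^ (-((i:ℤ)+1)) * (P * (p ^ (0+(i:ℤ)) * r * p ^ (-(0+(i:ℤ))))) * p ^ ((i:ℤ)+1) := by
            group
  | pred i ih =>
      have e1 : q ^ (-(-(i:ℤ)-1)) = q ^ (-(-(i:ℤ))) * q := by
        rw [show -(-(i:ℤ)-1) = -(-(i:ℤ)) + 1 by ring, zpow_add, zpow_one]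
      have hq' : q = p⁻¹ * z * r⁻¹ := by rw [hzdef]; group
      rw [e1, ih]
      conv_lhs => rw [hq']
      simp only [pik_pred]
      set P := pik (fun δ => p ^ δ * r * p ^ (-δ)) 0 (-(i:ℤ)) with hP
      have hA : Commute (p ^ (-(i:ℤ)) * p⁻¹) z :=
        ((hp.zpow_right (-(i:ℤ))).mul_right hp.inv_right).symm
      have hB : P * z = z * P := ((hcP (-(i:ℤ))).symm).eq
      calc z ^ (-(-(i:ℤ))) * P * p ^ (-(i:ℤ)) * (p⁻¹ * z * r⁻¹)
          = z ^ (-(-(i:ℤ))) * (P * ((p ^ (-(i:ℤ)) * p⁻¹) * (z * r⁻¹))) := by group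
        _ = z ^ (-(-(i:ℤ))) * (P * (z * ((p ^ (-(i:ℤ)) * p⁻¹) * r⁻¹))) := by rw [hA.left_comm]
        _ = z ^ (-(-(i:ℤ))) * ((P * z) * ((p ^ (-(i:ℤ)) * p⁻¹) * r⁻¹)) := by group
        _ = z ^ (-(-(i:ℤ))) * ((z * P) * ((p ^ (-(i:ℤ)) * p⁻¹) * r⁻¹)) := by rw [hB]
        _ = z ^ (-(-(i:ℤ)-1)) * (P * (p ^ (0 + -(i:ℤ) - 1) * r * p ^ (-(0 + -(i:ℤ) - 1)))⁻¹) *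
              p ^ (-(i:ℤ)-1) := by group

end Key

theorem statement_0 {G : Type*} [Group G] (p q r : G)
    (hp : Commute (p * q * r) p) (hr : Commute (p * q * r) r) (α β : ℤ) :
    p ^ α * q ^ (-β) * p ^ (-α) * q ^ β = uu (fun γ => p ^ γ * r * p ^ (-γ)) α β ∧
    (p ^ α * q ^ (-β)) * r * (p ^ α * q ^ (-β))⁻¹ =
      pik (fun γ => p ^ γ * r * p ^ (-γ)) α β * (p ^ (α + β) * r * p ^ (-(α + β))) *
        (pik (fun γ => p ^ γ * r * p ^ (-γ)) α β)⁻¹ := by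
  set z := p * q * r with hzdef
  set P := pik (fun γ => p ^ γ * r * p ^ (-γ)) 0 β with hPdef
  have hcP : Commute z P :=
    pik_commute (fun δ => p ^ δ * r * p ^ (-δ))
      (fun γ => ((hp.zpow_right γ).mul_right hr).mul_right (hp.zpow_right (-γ))) 0 β
  have h1 : q ^ (-β) = z ^ (-β) * P * p ^ β := hkey p q r hp hr β
  have h2 : q ^ β = p ^ (-β) * P⁻¹ * z ^ β := by
    rw [← inv_inv (q ^ β), ← zpow_neg q β, h1]; group
  have hconj : p ^ α * P * p ^ (-α) = pik (fun γ => p ^ γ * r * p ^ (-γ)) α β := by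
    have h := pik_conj p r α 0 β
    rw [add_zero] at h
    exact h
  -- swap lemma
  have swap1 : P⁻¹ * z ^ β = z ^ β * P⁻¹ := ((hcP.zpow_left β).inv_right.symm).eq
  constructor
  · rw [h1, h2, uu, ← hconj]
    have hW : Commute (z ^ β) (P * (p ^ β * (p ^ (-α) * p ^ (-β)))) :=
      (hcP.zpow_left β).mul_right (((hp.zpow_right β).zpow_left β).mul_right
        (((hp.zpow_right (-α)).zpow_left β).mul_right ((hp.zpow_right (-β)).zpow_left β)))
    calc p ^ α * (z ^ (-β) * P * p ^ β) * p ^ (-α) * (p ^ (-β) * P⁻¹ * z ^ β)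
        = p ^ α * (z ^ (-β) * (P * (p ^ β * (p ^ (-α) * p ^ (-β))))) * (P⁻¹ * z ^ β) := by group
      _ = p ^ α * (z ^ (-β) * (P * (p ^ β * (p ^ (-α) * p ^ (-β))))) * (z ^ β * P⁻¹) := by
          rw [swap1]
      _ = p ^ α * (z ^ (-β) * (z ^ β * (P * (p ^ β * (p ^ (-α) * p ^ (-β)))))) * P⁻¹ := by
          rw [hW.eq]; group
      _ = p ^ α * P * p ^ (-α) * (p ^ α * P * p ^ (-α))⁻¹ *
            ((p ^ α * P * p ^ (-α)) * P⁻¹) := by group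
      _ = p ^ α * P * p ^ (-α) * (P⁻¹ : G) := by group
  · rw [h1, ← hconj]
    have hW2 : Commute (z ^ β) (P * (p ^ β * (r * p ^ (-β)))) :=
      (hcP.zpow_left β).mul_right (((hp.zpow_right β).zpow_left β).mul_right
        ((hr.zpow_left β).mul_right ((hp.zpow_right (-β)).zpow_left β)))
    calc p ^ α * (z ^ (-β) * P * p ^ β) * r * (p ^ α * (z ^ (-β) * P * p ^ β))⁻¹
        = p ^ α * (z ^ (-β) * (P * (p ^ β * (r * p ^ (-β))))) * (P⁻¹ * z ^ β) * p ^ (-α) := by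
          group
      _ = p ^ α * (z ^ (-β) * (P * (p ^ β * (r * p ^ (-β))))) * (z ^ β * P⁻¹) * p ^ (-α) := by
          rw [swap1]
      _ = p ^ α * (z ^ (-β) * (z ^ β * (P * (p ^ β * (r * p ^ (-β)))))) * P⁻¹ * p ^ (-α) := by
          rw [hW2.eq]; group
      _ = p ^ α * P * p ^ (-α) * (p ^ (α + β) * r * p ^ (-(α + β))) *
            (p ^ α * P * p ^ (-α))⁻¹ := by group
end

section
/- Let N ≥ 1. The homomorphism from the free group on N+1 generators X, Y_0, …, Y_{N−1} to F₂ sending X ↦ x^N and Y_α ↦ x^α y x^{−α} (0 ≤ α ≤ N−1) is injective, and its image is ker φ_N. In particular, ker φ_N is a free group freely generated by x^N and the elements x^α y x^{−α}, 0 ≤ α ≤ N−1. -/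
/-- The free group on two generators `x`, `y`. -/
abbrev F2 := FreeGroup Bool

/-- The generator `x` of `F₂`. -/
def fx : F2 := FreeGroup.of true

/-- The generator `y` of `F₂`. -/
def fy : F2 := FreeGroup.of false

/-- The homomorphism `φ_N : F₂ → ℤ/Nℤ` with `φ_N(x) = 1`, `φ_N(y) = 0`
(with target written multiplicatively). -/
def phi (N : ℕ) : F2 →* Multiplicative (ZMod N) :=
  FreeGroup.lift (fun b => if b then Multiplicative.ofAdd (1 : ZMod N) else 1)

namespace St4

lemma pure_eq_of {γ : Type*} (x : γ) : (pure x : FreeGroup γ) = FreeGroup.of x := rfl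

variable (N : ℕ) [NeZero N]

abbrev K := FreeGroup (Option (Fin N))

/-- translation action of `ZMod N` on `ZMod N → K N`. -/
def rho : Multiplicative (ZMod N) →* MulAut (ZMod N → K N) where
  toFun a :=
    { toFun := fun f α => f (α + a.toAdd)
      invFun := fun f α => f (α - a.toAdd)
      left_inv := fun f => by funext α; simp
      right_inv := fun f => by funext α; simp
      map_mul' := fun f g => rfl }
  map_one' := by ext f α; simp
  map_mul' a b := by
    ext f α
    simp only [MulAut.mul_apply]
    show f (α + (a*b).toAdd) = f (α + a.toAdd + b.toAdd)
    rw [add_assoc]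
    rfl

abbrev W := (ZMod N → K N) ⋊[rho N] Multiplicative (ZMod N)

def Theta : F2 →* W N :=
  FreeGroup.lift (fun b =>
    if b then ⟨fun α => if α = -1 then FreeGroup.of none else 1, Multiplicative.ofAdd 1⟩
    else ⟨fun α => FreeGroup.of (some ⟨α.val, α.val_lt⟩), 1⟩)

def psiN : K N →* F2 :=
  FreeGroup.lift (fun t => t.elim (fx ^ N)
    (fun α => fx ^ (α : ℕ) * fy * (fx ^ (α : ℕ))⁻¹))

lemma right_Theta : (SemidirectProduct.rightHom).comp (Theta N) = phi N := by
  apply FreeGroup.ext_hom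
  intro b
  cases b <;> simp [Theta, phi]

lemma right_Theta_apply (w : F2) : (Theta N w).right = phi N w := by
  have := congrArg (fun f => f w) (right_Theta N)
  simpa using this

lemma phi_comp_psiN : (phi N).comp (psiN N) = 1 := by
  apply FreeGroup.ext_hom
  intro t
  cases t with
  | none => simp [psiN, phi, fx, ← ofAdd_nsmul, ZMod.natCast_self, nsmul_eq_mul]
  | some β => simp [psiN, phi, fx, fy]

@[simp] lemma rho_apply (a : Multiplicative (ZMod N)) (f : ZMod N → K N) (α : ZMod N) :
    rho N a f α = f (α + a.toAdd) := rfl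

lemma phi_psi_apply (u : K N) : phi N (psiN N u) = 1 := by
  have := congrArg (fun f => f u) (phi_comp_psiN N)
  simpa using this

lemma phi_pow (k : ℕ) : phi N (fx ^ k) = Multiplicative.ofAdd (k : ZMod N) := by
  simp [phi, fx, ← ofAdd_nsmul, nsmul_eq_mul]

lemma val_neg_one' : (-1 : ZMod N).val = N - 1 := by
  cases N with
  | zero => exact absurd rfl (NeZero.ne 0)
  | succ n => exact ZMod.val_neg_one n

lemma key (w : F2) : ∀ α : ZMod N,
    psiN N ((Theta N w).left α) =
      fx ^ α.val * w * (fx ^ ((α + (phi N w).toAdd).val))⁻¹ := by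
  refine FreeGroup.induction_on
    (C := fun w => ∀ α : ZMod N, psiN N ((Theta N w).left α) =
      fx ^ α.val * w * (fx ^ ((α + (phi N w).toAdd).val))⁻¹) w ?_ ?_ ?_ ?_
  · intro α; simp
  · intro b α
    cases b with
    | false =>
        have hphi : phi N (FreeGroup.of false) = 1 := by simp [phi]
        have hleft : (Theta N (FreeGroup.of false)).left α
            = FreeGroup.of (some ⟨α.val, α.val_lt⟩) := by simp [Theta]
        rw [hphi, hleft]
        simp [psiN, fy]
    | true =>
        have hphi : phi N (FreeGroup.of true) = Multiplicative.ofAdd (1 : ZMod N) := by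
          simp [phi]
        have hleft : (Theta N (FreeGroup.of true)).left α
            = if α = -1 then FreeGroup.of none else 1 := by simp [Theta]
        rw [hphi, hleft, toAdd_ofAdd]
        by_cases hα : α = -1
        · rw [if_pos hα, hα]
          have h1 : (-1 : ZMod N) + 1 = 0 := by ring
          rw [h1]
          simp only [ZMod.val_zero, pow_zero, inv_one, mul_one, val_neg_one']
          have h2 : psiN N (FreeGroup.of none) = fx ^ N := by simp [psiN]
          rw [h2, show (FreeGroup.of true : F2) = fx from rfl, ← pow_succ,
            Nat.sub_add_cancel (Nat.one_le_iff_ne_zero.mpr (NeZero.ne N))]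
        · have hN1 : 1 < N := by
            rcases Nat.lt_or_ge 1 N with h | h
            · exact h
            · interval_cases N
              · exact absurd rfl (NeZero.ne 0)
              · exact absurd (Subsingleton.elim α (-1)) hα
          haveI : Fact (1 < N) := ⟨hN1⟩
          have hval : α.val ≠ N - 1 := by
            intro h
            apply hα
            have h2 : ((α.val : ℕ) : ZMod N) = α := by
              rw [ZMod.natCast_val, ZMod.cast_id]
            rw [← h2, h]
            push_cast [Nat.one_le_iff_ne_zero.mpr (NeZero.ne N)]
            simp
          have hlt : α.val + 1 < N := by
            have := α.val_lt
            omega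
          have hsucc : (α + 1).val = α.val + 1 := by
            rw [ZMod.val_add, ZMod.val_one, Nat.mod_eq_of_lt hlt]
          rw [if_neg hα, hsucc, map_one, pow_succ,
            show (FreeGroup.of true : F2) = fx from rfl]
          group
  · intro b ih α
    rw [show Theta N (FreeGroup.of b)⁻¹ = (Theta N (FreeGroup.of b))⁻¹ from map_inv _ _,
      SemidirectProduct.inv_left]
    have h1 : (rho N (Theta N (FreeGroup.of b)).right⁻¹) (Theta N (FreeGroup.of b)).left⁻¹ α
        = ((Theta N (FreeGroup.of b)).left (α + ((Theta N (FreeGroup.of b)).right⁻¹).toAdd))⁻¹ := rfl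
    rw [h1]
    rw [show psiN N (((Theta N) (FreeGroup.of b)).left
        (α + Multiplicative.toAdd ((Theta N) (FreeGroup.of b)).right⁻¹))⁻¹
      = (psiN N (((Theta N) (FreeGroup.of b)).left
        (α + Multiplicative.toAdd ((Theta N) (FreeGroup.of b)).right⁻¹)))⁻¹ from map_inv _ _]
    rw [ih, right_Theta_apply, toAdd_inv]
    have h2 : α + -(phi N (FreeGroup.of b)).toAdd + (phi N (FreeGroup.of b)).toAdd = α := by ring
    rw [h2]
    rw [show phi N (FreeGroup.of b)⁻¹ = (phi N (FreeGroup.of b))⁻¹ from map_inv _ _, toAdd_inv]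
    simp [mul_inv_rev, mul_assoc]
  · intro u v ihu ihv α
    rw [map_mul, SemidirectProduct.mul_left, Pi.mul_apply, map_mul, rho_apply,
      right_Theta_apply, ihu, ihv, map_mul, toAdd_mul]
    have h2 : α + (phi N u).toAdd + (phi N v).toAdd
        = α + ((phi N u).toAdd + (phi N v).toAdd) := by ring
    rw [h2]
    group

lemma theta_pow (k : ℕ) (hk : k ≤ N) :
    (Theta N (fx ^ k)).left 0 = if k = N then FreeGroup.of none else 1 := by
  induction k with
  | zero =>
      rw [if_neg (fun h => (NeZero.ne N) h.symm), pow_zero, map_one]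
      rfl
  | succ k ih =>
      have hkN : k < N := hk
      rw [pow_succ, map_mul, SemidirectProduct.mul_left, Pi.mul_apply, rho_apply,
        right_Theta_apply, phi_pow, toAdd_ofAdd, ih (le_of_lt hkN), if_neg (Nat.ne_of_lt hkN),
        one_mul]
      have hTx : (Theta N fx).left (0 + (k : ZMod N))
          = if ((0 : ZMod N) + (k : ZMod N)) = -1 then FreeGroup.of none else 1 := by
        simp only [Theta, fx, FreeGroup.lift_apply_of, if_true]
      rw [hTx, zero_add]
      have hiff : ((k : ZMod N) = -1) ↔ (k + 1 = N) := by
        constructor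
        · intro h
          have h2 := congrArg ZMod.val h
          rw [ZMod.val_cast_of_lt hkN, val_neg_one'] at h2
          omega
        · intro h
          have h2 : k = N - 1 := by omega
          subst h2
          push_cast [Nat.one_le_iff_ne_zero.mpr (NeZero.ne N)]
          simp
      by_cases h : (k : ZMod N) = -1
      · rw [if_pos h, if_pos (hiff.mp h)]
      · rw [if_neg h, if_neg (fun hc => h (hiff.mpr hc))]

lemma retraction (u : K N) : (Theta N (psiN N u)).left 0 = u := by
  refine FreeGroup.induction_on
    (C := fun u => (Theta N (psiN N u)).left 0 = u) u ?_ ?_ ?_ ?_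
  · simp
  · intro t
    cases t with
    | none =>
        have h : psiN N (FreeGroup.of none) = fx ^ N := by simp [psiN]
        rw [h, theta_pow N N le_rfl, if_pos rfl]
    | some β =>
        have h : psiN N (FreeGroup.of (some β)) = fx ^ (β : ℕ) * fy * (fx ^ (β : ℕ))⁻¹ := by
          simp [psiN]
        rw [h, map_mul, map_mul, map_inv]
        rw [SemidirectProduct.mul_left, SemidirectProduct.mul_left,
          SemidirectProduct.inv_left, SemidirectProduct.mul_right]
        simp only [Pi.mul_apply, rho_apply, Pi.inv_apply, toAdd_inv, toAdd_mul]
        rw [right_Theta_apply, right_Theta_apply]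
        have hphiy : phi N fy = 1 := by simp [phi, fy]
        rw [hphiy, phi_pow]
        have hb : (β : ℕ) < N := β.isLt
        have h0 : (Theta N (fx ^ (β : ℕ))).left 0 = 1 := by
          rw [theta_pow N _ (le_of_lt hb), if_neg (Nat.ne_of_lt hb)]
        simp only [toAdd_ofAdd, toAdd_one, add_zero, zero_add, one_mul]
        rw [show ((β : ℕ) : ZMod N) + -((β : ℕ) : ZMod N) = (0 : ZMod N) by ring, h0,
          inv_one, mul_one]
        have hTy : (Theta N fy).left (((β : ℕ) : ZMod N))
            = FreeGroup.of (some ⟨(((β : ℕ) : ZMod N)).val, ZMod.val_lt _⟩) := by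
          simp [Theta, fy]
        rw [hTy]
        have hfin : (⟨(((β : ℕ) : ZMod N)).val, ZMod.val_lt _⟩ : Fin N) = β :=
          Fin.ext (ZMod.val_cast_of_lt hb)
        rw [hfin, one_mul]
  · intro t ih
    rw [show psiN N (FreeGroup.of t)⁻¹ = (psiN N (FreeGroup.of t))⁻¹ from map_inv _ _,
      show Theta N (psiN N (FreeGroup.of t))⁻¹ = (Theta N (psiN N (FreeGroup.of t)))⁻¹ from map_inv _ _,
      SemidirectProduct.inv_left]
    have h1 : (rho N (Theta N (psiN N (FreeGroup.of t))).right⁻¹)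
          (Theta N (psiN N (FreeGroup.of t))).left⁻¹ 0
        = ((Theta N (psiN N (FreeGroup.of t))).left
            (0 + ((Theta N (psiN N (FreeGroup.of t))).right⁻¹).toAdd))⁻¹ := rfl
    rw [h1, right_Theta_apply, phi_psi_apply]
    simpa using congrArg (·⁻¹) ih
  · intro u v ihu ihv
    rw [map_mul, map_mul, SemidirectProduct.mul_left, Pi.mul_apply, rho_apply,
      right_Theta_apply, phi_psi_apply]
    simp only [toAdd_one, add_zero]
    rw [ihu, ihv]

end St4

/-- The homomorphism from the free group on `N+1` generators `X, Y_0, …, Y_{N−1}` to `F₂`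
sending `X ↦ x^N` and `Y_α ↦ x^α y x^{−α}` is injective with image `ker φ_N`. -/
theorem statement_4 (N : ℕ) (hN : 1 ≤ N) :
    let ψ : FreeGroup (Option (Fin N)) →* F2 :=
      FreeGroup.lift (fun t => t.elim (fx ^ N)
        (fun α => fx ^ (α : ℕ) * fy * (fx ^ (α : ℕ))⁻¹))
    Function.Injective ψ ∧ ψ.range = (phi N).ker := by
  haveI : NeZero N := ⟨by omega⟩
  intro ψ
  have hψ : ψ = St4.psiN N := rfl
  rw [hψ]
  constructor
  · intro u v h
    have hu := St4.retraction N u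
    have hv := St4.retraction N v
    rw [← hu, ← hv, h]
  · apply le_antisymm
    · rintro w ⟨u, rfl⟩
      exact St4.phi_psi_apply N u
    · intro w hw
      have h0 := St4.key N w 0
      rw [MonoidHom.mem_ker] at hw
      rw [hw] at h0
      simp only [toAdd_one, add_zero, ZMod.val_zero, pow_zero, one_mul, inv_one, mul_one] at h0
      exact ⟨_, h0⟩
end

section
/- Let f, g ∈ F₂ with f lying in the commutator subgroup of F₂. Suppose that in P₄ the mixed pentagon equation holds: g(x_{01}, x_{12}x_{13}) g(x_{02}x_{12}, x_{23}) = f(x_{12},x_{23}) g(x_{01}x_{02}, x_{13}x_{23}) g(x_{01}, x_{12}). Then β(g) = 0, where β : F₂ → ℤ is the homomorphism with β(x) = 1 and β(y) = 0. -/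
/-- The braid relations on `n` generators `σ_0, …, σ_{n−1}`:
`σ_i σ_j = σ_j σ_i` for `|i−j| ≥ 2` and `σ_i σ_{i+1} σ_i = σ_{i+1} σ_i σ_{i+1}`. -/
def braidRels (n : ℕ) : Set (FreeGroup (Fin n)) :=
  { r | (∃ i j : Fin n, (i : ℕ) + 2 ≤ (j : ℕ) ∧
          r = FreeGroup.of i * FreeGroup.of j * (FreeGroup.of i)⁻¹ * (FreeGroup.of j)⁻¹) ∨
        (∃ i j : Fin n, (i : ℕ) + 1 = (j : ℕ) ∧
          r = FreeGroup.of i * FreeGroup.of j * FreeGroup.of i *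
              (FreeGroup.of j * FreeGroup.of i * FreeGroup.of j)⁻¹) }

/-- The braid group `B_{n+1}` on `n+1` strands, presented by `n` generators
`σ_0, …, σ_{n−1}` and the braid relations. -/
abbrev Braid (n : ℕ) := PresentedGroup (braidRels n)

/-- The generator `σ_k` of `B_{n+1}` (junk value `1` if `k ≥ n`). -/
def gen (n k : ℕ) : Braid n :=
  if h : k < n then PresentedGroup.of (⟨k, h⟩ : Fin n) else 1

/-- The product `σ_{j−1} σ_{j−2} ⋯ σ_{i+1}`. -/
def chain (n i j : ℕ) : Braid n :=
  ((List.range (j - 1 - i)).map (fun k => gen n (j - 1 - k))).prod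

/-- The Artin generator `x_{ij} = (σ_{j−1}⋯σ_{i+1}) σ_i² (σ_{j−1}⋯σ_{i+1})⁻¹`
of the pure braid group `P_{n+1}`. -/
def artin (n i j : ℕ) : Braid n :=
  chain n i j * (gen n i) ^ 2 * (chain n i j)⁻¹

/-- `ev w u v` is the image `w(u,v)` of `w ∈ F₂` under the homomorphism `F₂ → G`,
`x ↦ u`, `y ↦ v`. -/
def ev {G : Type*} [Group G] (w : F2) (u v : G) : G :=
  FreeGroup.lift (fun b => if b then u else v) w

/-- `betaInt` is the homomorphism `β : F₂ → ℤ` with `β(x) = 1`, `β(y) = 0`. -/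
def betaInt (w : F2) : ℤ :=
  Multiplicative.toAdd
    (FreeGroup.lift (fun b => if b then Multiplicative.ofAdd (1 : ℤ) else 1) w)

/-! ### Auxiliary development -/


abbrev MP.A := Fin 4 × Fin 4 → ℤ
abbrev MP.NN := Multiplicative MP.A

namespace MP

def permAct (s : Equiv.Perm (Fin 4)) : NN ≃* NN :=
  AddEquiv.toMultiplicative
  { toFun := fun v p => v (s⁻¹ p.1, s⁻¹ p.2)
    invFun := fun v p => v (s p.1, s p.2)
    left_inv := fun v => by funext p; simp
    right_inv := fun v => by funext p; simp
    map_add' := fun u v => rfl }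

def phiG : Equiv.Perm (Fin 4) →* MulAut NN where
  toFun := permAct
  map_one' := by ext v; simp [permAct]
  map_mul' s t := by ext v; simp [permAct, mul_inv_rev]

abbrev GG := SemidirectProduct NN (Equiv.Perm (Fin 4)) phiG

instance : DecidableEq GG := fun a b =>
  decidable_of_iff (a.left = b.left ∧ a.right = b.right)
    ⟨fun ⟨h1, h2⟩ => SemidirectProduct.ext h1 h2, fun h => by subst h; exact ⟨rfl, rfl⟩⟩

def eij (i j : Fin 4) : A := fun p => if p = (i, j) ∨ p = (j, i) then 1 else 0

def sg (k : Fin 3) : GG :=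
  ⟨Multiplicative.ofAdd (eij k.castSucc k.succ), Equiv.swap k.castSucc k.succ⟩

theorem sg_rels : ∀ r ∈ braidRels 3, FreeGroup.lift sg r = 1 := by
  rintro r (⟨i, j, hij, rfl⟩ | ⟨i, j, hij, rfl⟩) <;>
    fin_cases i <;> fin_cases j <;> simp_all <;> decide

def psi : Braid 3 →* GG := PresentedGroup.toGroup sg_rels

def av (i j : Fin 4) : NN :=
  Multiplicative.ofAdd (fun p => if p = (i, j) ∨ p = (j, i) then 2 else 0)

theorem psi_gen (k : ℕ) (h : k < 3) : psi (gen 3 k) = sg ⟨k, h⟩ := by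
  rw [gen, dif_pos h]; exact PresentedGroup.toGroup.of _

theorem psi_a01 : psi (artin 3 0 1) = SemidirectProduct.inl (av 0 1) := by
  rw [show artin 3 0 1 = (1 : Braid 3) * gen 3 0 ^ 2 * (1 : Braid 3)⁻¹ from rfl]
  rw [map_mul, map_mul, map_inv, map_pow, map_one, psi_gen 0 (by norm_num)]
  decide

theorem psi_a12 : psi (artin 3 1 2) = SemidirectProduct.inl (av 1 2) := by
  rw [show artin 3 1 2 = (1 : Braid 3) * gen 3 1 ^ 2 * (1 : Braid 3)⁻¹ from rfl]
  rw [map_mul, map_mul, map_inv, map_pow, map_one, psi_gen 1 (by norm_num)]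
  decide

theorem psi_a23 : psi (artin 3 2 3) = SemidirectProduct.inl (av 2 3) := by
  rw [show artin 3 2 3 = (1 : Braid 3) * gen 3 2 ^ 2 * (1 : Braid 3)⁻¹ from rfl]
  rw [map_mul, map_mul, map_inv, map_pow, map_one, psi_gen 2 (by norm_num)]
  decide

theorem psi_a02 : psi (artin 3 0 2) = SemidirectProduct.inl (av 0 2) := by
  rw [show artin 3 0 2 = (gen 3 1 * 1) * gen 3 0 ^ 2 * (gen 3 1 * 1)⁻¹ from rfl]
  rw [map_mul, map_mul, map_inv, map_pow, map_mul, map_one,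
    psi_gen 0 (by norm_num), psi_gen 1 (by norm_num)]
  decide

theorem psi_a13 : psi (artin 3 1 3) = SemidirectProduct.inl (av 1 3) := by
  rw [show artin 3 1 3 = (gen 3 2 * 1) * gen 3 1 ^ 2 * (gen 3 2 * 1)⁻¹ from rfl]
  rw [map_mul, map_mul, map_inv, map_pow, map_mul, map_one,
    psi_gen 1 (by norm_num), psi_gen 2 (by norm_num)]
  decide

end MP

theorem ev_map {G H : Type*} [Group G] [Group H] (φ : G →* H) (w : F2) (u v : G) :
    φ (ev w u v) = ev w (φ u) (φ v) := by
  have h : φ.comp (FreeGroup.lift fun b : Bool => if b then u else v) =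
      FreeGroup.lift fun b : Bool => if b then φ u else φ v := by
    ext b
    cases b <;> simp
  unfold ev
  rw [← h]
  rfl

def gammaInt (w : F2) : ℤ :=
  Multiplicative.toAdd
    (FreeGroup.lift (fun b => if b then 1 else Multiplicative.ofAdd (1 : ℤ)) w)

theorem ev_comm {C : Type*} [CommGroup C] (w : F2) (u v : C) :
    ev w u v = u ^ betaInt w * v ^ gammaInt w := by
  have h : (FreeGroup.lift fun b : Bool => if b then u else v) =
      ((zpowersHom C u).comp
          (FreeGroup.lift (fun b => if b then Multiplicative.ofAdd (1 : ℤ) else 1))) *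
        ((zpowersHom C v).comp
          (FreeGroup.lift (fun b => if b then 1 else Multiplicative.ofAdd (1 : ℤ)))) := by
    ext b
    cases b <;> simp
  unfold ev
  rw [h]
  rfl

open MP

/-- If `f ∈ [F₂,F₂]` and `(f,g)` satisfies the mixed pentagon equation in `P₄`
(stated in `B₄ = Braid 3`, of which `P₄` is a subgroup), then `β(g) = 0`. -/
theorem statement_7 (f g : F2) (hf : f ∈ commutator F2)
    (hpent : ev g (artin 3 0 1) (artin 3 1 2 * artin 3 1 3) *
        ev g (artin 3 0 2 * artin 3 1 2) (artin 3 2 3) =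
      ev f (artin 3 1 2) (artin 3 2 3) *
        ev g (artin 3 0 1 * artin 3 0 2) (artin 3 1 3 * artin 3 2 3) *
        ev g (artin 3 0 1) (artin 3 1 2)) :
    betaInt g = 0 := by
  classical
  have inl_ev : ∀ (w : F2) (a b : MP.NN),
      ev w (SemidirectProduct.inl (φ := phiG) a) (SemidirectProduct.inl (φ := phiG) b) =
        SemidirectProduct.inl (ev w a b) := fun w a b => (ev_map _ _ _ _).symm
  have H := congrArg psi hpent
  simp only [map_mul, ev_map psi, psi_a01, psi_a02, psi_a12, psi_a13, psi_a23] at H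
  simp only [← map_mul (SemidirectProduct.inl (φ := phiG)), inl_ev] at H
  have HN := SemidirectProduct.inl_injective H
  set E : MP.NN →* Multiplicative ℤ :=
    AddMonoidHom.toMultiplicative (Pi.evalAddMonoidHom (fun _ : Fin 4 × Fin 4 => ℤ)
      ((0 : Fin 4), (1 : Fin 4))) with hE
  have HZ := congrArg E HN
  have e01 : E (av 0 1) = Multiplicative.ofAdd 2 := by decide
  have e02 : E (av 0 2) = 1 := by decide
  have e12 : E (av 1 2) = 1 := by decide
  have e13 : E (av 1 3) = 1 := by decide
  have e23 : E (av 2 3) = 1 := by decide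
  simp only [map_mul, map_zpow, ev_map E, e01, e02, e12, e13, e23, ev_comm,
    one_zpow, mul_one, one_mul] at HZ
  have := congrArg Multiplicative.toAdd HZ
  simp only [toAdd_mul, toAdd_zpow, toAdd_ofAdd, smul_eq_mul] at this
  linarith
end

section
/- Let f, h ∈ F₂ and suppose that in P₄ the following relation holds: h(x_{01}, x_{12}x_{13}) · h(x_{02}x_{12}, x_{23}) = f(x_{12},x_{23}) · h(x_{01}x_{02}, x_{13}x_{23}) · h(x_{01}, x_{12}). Then h = y^{c(h)} · f in F₂, where c : F₂ → ℤ is the homomorphism with c(x) = 0 and c(y) = 1. -/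
/-- `cInt` is the homomorphism `c : F₂ → ℤ` with `c(x) = 0`, `c(y) = 1`. -/
def cInt (w : F2) : ℤ :=
  Multiplicative.toAdd
    (FreeGroup.lift (fun b => if b then 1 else Multiplicative.ofAdd (1 : ℤ)) w)


/-! ### Auxiliary development for the proof -/

section Aux

open Pointwise

abbrev SL2 := Matrix.SpecialLinearGroup (Fin 2) ℤ

private def TT0 : SL2 := ⟨!![1,1;0,1], by norm_num [Matrix.det_fin_two_of]⟩
private def TT1 : SL2 := ⟨!![1,0;-1,1], by norm_num [Matrix.det_fin_two_of]⟩
private def MA : SL2 := ⟨!![1,2;0,1], by norm_num [Matrix.det_fin_two_of]⟩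
private def MB : SL2 := ⟨!![1,0;-2,1], by norm_num [Matrix.det_fin_two_of]⟩
private def MAt : SL2 := ⟨!![3,2;-2,-1], by norm_num [Matrix.det_fin_two_of]⟩
private def MZ : SL2 := ⟨!![-1,0;0,-1], by norm_num [Matrix.det_fin_two_of]⟩

private theorem braidT : TT0 * TT1 * TT0 = TT1 * TT0 * TT1 := by
  apply Subtype.ext
  simp only [Matrix.SpecialLinearGroup.coe_mul]
  simp [TT0, TT1, Matrix.SpecialLinearGroup.coe_mul, Matrix.mul_fin_two]

private theorem TT0sq : TT0 * TT0 = MA := by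
  apply Subtype.ext
  simp only [Matrix.SpecialLinearGroup.coe_mul]
  simp [TT0, MA, Matrix.SpecialLinearGroup.coe_mul, Matrix.mul_fin_two]

private theorem TT1sq : TT1 * TT1 = MB := by
  apply Subtype.ext
  simp only [Matrix.SpecialLinearGroup.coe_mul]
  simp [TT1, MB, Matrix.SpecialLinearGroup.coe_mul, Matrix.mul_fin_two]

private theorem conjAt : TT1 * MA = MAt * TT1 := by
  apply Subtype.ext
  simp only [Matrix.SpecialLinearGroup.coe_mul]
  simp [TT1, MA, MAt, Matrix.SpecialLinearGroup.coe_mul, Matrix.mul_fin_two]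

private theorem AAtB : MA * MAt * MB = MZ := by
  apply Subtype.ext
  simp only [Matrix.SpecialLinearGroup.coe_mul]
  simp [MA, MAt, MB, MZ, Matrix.SpecialLinearGroup.coe_mul, Matrix.mul_fin_two]

private theorem MZ_comm (g : SL2) : Commute MZ g := by
  show MZ * g = g * MZ
  apply Subtype.ext
  have h : (MZ : Matrix (Fin 2) (Fin 2) ℤ) = -1 := by
    ext i j; fin_cases i <;> fin_cases j <;> simp [MZ, Matrix.one_apply]
  simp [Matrix.SpecialLinearGroup.coe_mul, h]

private theorem MAinv : (MA⁻¹ : SL2) = ⟨!![1,-2;0,1], by norm_num [Matrix.det_fin_two_of]⟩ := by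
  apply inv_eq_of_mul_eq_one_right
  apply Subtype.ext
  show (MA : Matrix (Fin 2) (Fin 2) ℤ) * !![1,-2;0,1] = 1
  simp [MA, Matrix.SpecialLinearGroup.coe_mul, Matrix.mul_fin_two, Matrix.one_fin_two]

private theorem MBinv : (MB⁻¹ : SL2) = ⟨!![1,0;2,1], by norm_num [Matrix.det_fin_two_of]⟩ := by
  apply inv_eq_of_mul_eq_one_right
  apply Subtype.ext
  show (MB : Matrix (Fin 2) (Fin 2) ℤ) * !![1,0;2,1] = 1
  simp [MB, Matrix.SpecialLinearGroup.coe_mul, Matrix.mul_fin_two, Matrix.one_fin_two]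

/-! #### Freeness of the subgroup generated by `MA`, `MB` (ping-pong) -/

private def V2 := {v : Fin 2 → ℤ // v ≠ 0}

private theorem mulVec_SL_ne (g : SL2) (v : Fin 2 → ℤ) (hv : v ≠ 0) :
    (g : Matrix (Fin 2) (Fin 2) ℤ).mulVec v ≠ 0 := by
  intro h
  apply hv
  have : ((g⁻¹ : SL2) : Matrix (Fin 2) (Fin 2) ℤ).mulVec
      ((g : Matrix (Fin 2) (Fin 2) ℤ).mulVec v) = v := by
    rw [Matrix.mulVec_mulVec, ← Matrix.SpecialLinearGroup.coe_mul, inv_mul_cancel,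
      Matrix.SpecialLinearGroup.coe_one, Matrix.one_mulVec]
  rw [h, Matrix.mulVec_zero] at this
  exact this.symm

private instance : MulAction SL2 V2 where
  smul g v := ⟨(g : Matrix (Fin 2) (Fin 2) ℤ).mulVec v.1, mulVec_SL_ne g v.1 v.2⟩
  one_smul v := by
    apply Subtype.ext
    show ((1 : SL2) : Matrix (Fin 2) (Fin 2) ℤ).mulVec v.1 = v.1
    rw [Matrix.SpecialLinearGroup.coe_one, Matrix.one_mulVec]
  mul_smul g h v := by
    apply Subtype.ext
    show ((g * h : SL2) : Matrix (Fin 2) (Fin 2) ℤ).mulVec v.1 = _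
    rw [Matrix.SpecialLinearGroup.coe_mul, ← Matrix.mulVec_mulVec]
    rfl

private theorem smul_coe (g : SL2) (v : V2) :
    (g • v).1 = (g : Matrix (Fin 2) (Fin 2) ℤ).mulVec v.1 := rfl

private theorem V2_ne (v : V2) : ¬ (v.1 0 = 0 ∧ v.1 1 = 0) := by
  rintro ⟨h0, h1⟩
  apply v.2
  funext i
  fin_cases i <;> assumption

private theorem mulVec_explicit (a b c d : ℤ) (v : Fin 2 → ℤ) :
    (!![a,b;c,d]).mulVec v = ![a * v 0 + b * v 1, c * v 0 + d * v 1] := by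
  funext i
  fin_cases i <;>
    simp [Matrix.mulVec, dotProduct, Fin.sum_univ_two]

private def XS : Bool → Set V2
  | true => {v | (0 ≤ v.1 1 ∧ v.1 1 < v.1 0) ∨ (v.1 1 ≤ 0 ∧ v.1 0 < v.1 1)}
  | false => {v | (0 ≤ v.1 0 ∧ v.1 1 < -v.1 0) ∨ (v.1 0 ≤ 0 ∧ -v.1 0 < v.1 1)}

private def YS : Bool → Set V2
  | true => {v | (0 < v.1 1 ∧ v.1 0 ≤ -v.1 1) ∨ (v.1 1 < 0 ∧ -v.1 1 ≤ v.1 0)}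
  | false => {v | (0 < v.1 0 ∧ v.1 0 ≤ v.1 1) ∨ (v.1 0 < 0 ∧ v.1 1 ≤ v.1 0)}

private theorem MA_coe : (MA : Matrix (Fin 2) (Fin 2) ℤ) = !![1,2;0,1] := rfl
private theorem MB_coe : (MB : Matrix (Fin 2) (Fin 2) ℤ) = !![1,0;-2,1] := rfl

private theorem lift_AB_injective :
    Function.Injective (FreeGroup.lift (fun b : Bool => if b then MA else MB)) := by
  have hv21 : (![2,1] : Fin 2 → ℤ) ≠ 0 := by intro h; simpa using congrFun h 1
  apply FreeGroup.injective_lift_of_ping_pong _ XS YS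
  · rintro (_|_)
    · exact ⟨⟨![1,-2], by intro h; simpa using congrFun h 0⟩, Or.inl ⟨by norm_num, by norm_num⟩⟩
    · exact ⟨⟨![2,1], hv21⟩, Or.inl ⟨by norm_num, by norm_num⟩⟩
  · rintro (_|_) (_|_) hij <;> first
      | exact absurd rfl hij
      | · simp only [Function.onFun]
          rw [Set.disjoint_left]
          rintro v h1 h2
          simp only [XS, Set.mem_setOf_eq] at h1 h2
          omega
  · rintro (_|_) (_|_) hij <;> first
      | exact absurd rfl hij
      | · simp only [Function.onFun]
          rw [Set.disjoint_left]
          rintro v h1 h2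
          simp only [YS, Set.mem_setOf_eq] at h1 h2
          omega
  · rintro (_|_) (_|_) <;>
      · rw [Set.disjoint_left]
        rintro v h1 h2
        simp only [XS, YS, Set.mem_setOf_eq] at h1 h2
        omega
  · rintro (_|_) x hx <;> rw [Set.mem_smul_set] at hx <;> obtain ⟨y, hy, rfl⟩ := hx <;>
      have hy' := V2_ne y
    · show MB • y ∈ XS false
      have hy2 : y ∉ YS false := hy
      simp only [XS, YS, Set.mem_setOf_eq, smul_coe, MB_coe, mulVec_explicit,
        Matrix.cons_val_zero, Matrix.cons_val_one, Matrix.head_cons] at hy2 ⊢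
      omega
    · show MA • y ∈ XS true
      have hy2 : y ∉ YS true := hy
      simp only [XS, YS, Set.mem_setOf_eq, smul_coe, MA_coe, mulVec_explicit,
        Matrix.cons_val_zero, Matrix.cons_val_one, Matrix.head_cons] at hy2 ⊢
      omega
  · rintro (_|_) x hx <;> rw [Set.mem_smul_set] at hx <;> obtain ⟨y, hy, rfl⟩ := hx <;>
      have hy' := V2_ne y
    · show MB⁻¹ • y ∈ YS false
      have hy2 : y ∉ XS false := hy
      simp only [YS, Set.mem_setOf_eq, smul_coe]
      rw [MBinv]
      simp only [XS, YS, Set.mem_setOf_eq, smul_coe, mulVec_explicit,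
        Matrix.cons_val_zero, Matrix.cons_val_one, Matrix.head_cons] at hy2 ⊢
      omega
    · show MA⁻¹ • y ∈ YS true
      have hy2 : y ∉ XS true := hy
      simp only [YS, Set.mem_setOf_eq, smul_coe]
      rw [MAinv]
      simp only [XS, YS, Set.mem_setOf_eq, smul_coe, mulVec_explicit,
        Matrix.cons_val_zero, Matrix.cons_val_one, Matrix.head_cons] at hy2 ⊢
      omega

/-! #### The wreath-product representation of `B₄` (simultaneous strand deletion) -/

private def permHom : Equiv.Perm (Fin 4) →* MulAut (Fin 4 → SL2) where
  toFun π :=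
    { toFun := fun v => v ∘ π.symm
      invFun := fun v => v ∘ π
      left_inv := fun v => by funext i; simp
      right_inv := fun v => by funext i; simp
      map_mul' := fun u v => rfl }
  map_one' := rfl
  map_mul' := fun π ρ => by
    ext v i
    simp [MulAut.mul_apply]
    rfl

private theorem permHom_apply (π : Equiv.Perm (Fin 4)) (v : Fin 4 → SL2) :
    permHom π v = v ∘ π.symm := rfl

private abbrev W := SemidirectProduct (Fin 4 → SL2) (Equiv.Perm (Fin 4)) permHom

private def w0 : W := ⟨![1,1,TT0,TT0], Equiv.swap 0 1⟩
private def w1 : W := ⟨![TT0,1,1,TT1], Equiv.swap 1 2⟩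
private def w2 : W := ⟨![TT1,TT1,1,1], Equiv.swap 2 3⟩

private theorem comm02 : w0 * w2 = w2 * w0 := by
  unfold w0 w2
  simp only [SemidirectProduct.mul_def]
  congr 1
  · funext i
    fin_cases i <;> simp [permHom_apply, Equiv.swap_apply_def]
  · decide

private theorem braid01 : w0 * w1 * w0 = w1 * w0 * w1 := by
  unfold w0 w1
  simp only [SemidirectProduct.mul_def]
  congr 1
  · funext i
    fin_cases i <;>
      simp [permHom_apply, Equiv.Perm.mul_def, Equiv.symm_trans_apply, Equiv.symm_swap,
        Equiv.swap_apply_def, braidT]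
  · decide

private theorem braid12 : w1 * w2 * w1 = w2 * w1 * w2 := by
  unfold w1 w2
  simp only [SemidirectProduct.mul_def]
  congr 1
  · funext i
    fin_cases i <;>
      simp [permHom_apply, Equiv.Perm.mul_def, Equiv.symm_trans_apply, Equiv.symm_swap,
        Equiv.swap_apply_def, braidT]
  · decide

private def wGen : Fin 3 → W := ![w0, w1, w2]

private theorem wrels : ∀ r ∈ braidRels 3, FreeGroup.lift wGen r = 1 := by
  rintro r (⟨i, j, hij, rfl⟩ | ⟨i, j, hij, rfl⟩) <;>
    have hi := i.isLt <;> have hj := j.isLt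
  · have hi0 : i = 0 := by
      apply Fin.ext
      simp only [Fin.val_zero]
      omega
    have hj2 : j = 2 := by
      apply Fin.ext
      simp only [Fin.val_two]
      omega
    subst hi0; subst hj2
    simp only [map_mul, map_inv, FreeGroup.lift_apply_of]
    rw [mul_inv_eq_one, mul_inv_eq_iff_eq_mul]
    show wGen 0 * wGen 2 = wGen 2 * wGen 0
    simp only [wGen, Matrix.cons_val_zero, Matrix.cons_val_two, Matrix.tail_cons,
      Matrix.head_cons]
    exact comm02
  · simp only [map_mul, map_inv, FreeGroup.lift_apply_of]
    rw [mul_inv_eq_one]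
    fin_cases i <;> fin_cases j <;> simp only [Fin.val_zero, Fin.val_one, Fin.val_two] at hij <;>
      first
        | omega
        | (simp only [wGen, Matrix.cons_val_zero, Matrix.cons_val_one, Matrix.cons_val_two,
            Matrix.tail_cons, Matrix.head_cons]
           first
             | exact braid01
             | exact braid12)

private def Phi : Braid 3 →* W := PresentedGroup.toGroup wrels

private theorem Phi_gen0 : Phi (gen 3 0) = w0 := by
  show Phi (gen 3 0) = wGen 0
  rw [show gen 3 0 = PresentedGroup.of (⟨0, by norm_num⟩ : Fin 3) from by simp [gen]]
  exact PresentedGroup.toGroup.of wrels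

private theorem Phi_gen1 : Phi (gen 3 1) = w1 := by
  show Phi (gen 3 1) = wGen 1
  rw [show gen 3 1 = PresentedGroup.of (⟨1, by norm_num⟩ : Fin 3) from by simp [gen]]
  exact PresentedGroup.toGroup.of wrels

private theorem Phi_gen2 : Phi (gen 3 2) = w2 := by
  show Phi (gen 3 2) = wGen 2
  rw [show gen 3 2 = PresentedGroup.of (⟨2, by norm_num⟩ : Fin 3) from by simp [gen]]
  exact PresentedGroup.toGroup.of wrels

private theorem artin01 : artin 3 0 1 = gen 3 0 ^ 2 := by simp [artin, chain]
private theorem artin12 : artin 3 1 2 = gen 3 1 ^ 2 := by simp [artin, chain]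
private theorem artin23 : artin 3 2 3 = gen 3 2 ^ 2 := by simp [artin, chain]
private theorem artin02 : artin 3 0 2 = gen 3 1 * gen 3 0 ^ 2 * (gen 3 1)⁻¹ := by
  simp [artin, chain, List.range_succ]
private theorem artin13 : artin 3 1 3 = gen 3 2 * gen 3 1 ^ 2 * (gen 3 2)⁻¹ := by
  simp [artin, chain, List.range_succ]

private def V01 : Fin 4 → SL2 := ![1,1,MA,MA]
private def V12 : Fin 4 → SL2 := ![MA,1,1,MB]
private def V23 : Fin 4 → SL2 := ![MB,MB,1,1]
private def V02 : Fin 4 → SL2 := ![1,MA,1,MAt]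
private def V13 : Fin 4 → SL2 := ![MAt,1,MB,1]

private theorem w0sq : w0 * w0 = SemidirectProduct.inl V01 := by
  show w0 * w0 = (⟨V01, 1⟩ : W)
  unfold w0
  simp only [SemidirectProduct.mul_def]
  congr 1
  · funext i
    fin_cases i <;> simp [V01, permHom_apply, Equiv.swap_apply_def, TT0sq]
  · decide

private theorem w1sq : w1 * w1 = SemidirectProduct.inl V12 := by
  show w1 * w1 = (⟨V12, 1⟩ : W)
  unfold w1
  simp only [SemidirectProduct.mul_def]
  congr 1
  · funext i
    fin_cases i <;> simp [V12, permHom_apply, Equiv.swap_apply_def, TT0sq, TT1sq]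
  · decide

private theorem w2sq : w2 * w2 = SemidirectProduct.inl V23 := by
  show w2 * w2 = (⟨V23, 1⟩ : W)
  unfold w2
  simp only [SemidirectProduct.mul_def]
  congr 1
  · funext i
    fin_cases i <;> simp [V23, permHom_apply, Equiv.swap_apply_def, TT1sq]
  · decide

private theorem Phi_x01 : Phi (artin 3 0 1) = SemidirectProduct.inl V01 := by
  rw [artin01, map_pow, Phi_gen0, sq, w0sq]

private theorem Phi_x12 : Phi (artin 3 1 2) = SemidirectProduct.inl V12 := by
  rw [artin12, map_pow, Phi_gen1, sq, w1sq]

private theorem Phi_x23 : Phi (artin 3 2 3) = SemidirectProduct.inl V23 := by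
  rw [artin23, map_pow, Phi_gen2, sq, w2sq]

private theorem Phi_x02 : Phi (artin 3 0 2) = SemidirectProduct.inl V02 := by
  rw [artin02, map_mul, map_mul, map_inv, map_pow, Phi_gen0, Phi_gen1, sq, w0sq, mul_inv_eq_iff_eq_mul]
  show w1 * (⟨V01, 1⟩ : W) = (⟨V02, 1⟩ : W) * w1
  unfold w1
  simp only [SemidirectProduct.mul_def]
  congr 1
  · funext i
    fin_cases i <;> simp [V01, V02, permHom_apply, Equiv.swap_apply_def, conjAt]

private theorem Phi_x13 : Phi (artin 3 1 3) = SemidirectProduct.inl V13 := by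
  rw [artin13, map_mul, map_mul, map_inv, map_pow, Phi_gen1, Phi_gen2, sq, w1sq, mul_inv_eq_iff_eq_mul]
  show w2 * (⟨V12, 1⟩ : W) = (⟨V13, 1⟩ : W) * w2
  unfold w2
  simp only [SemidirectProduct.mul_def]
  congr 1
  · funext i
    fin_cases i <;> simp [V12, V13, permHom_apply, Equiv.swap_apply_def, conjAt]

/-! #### Generic lemmas about `ev` and `cInt` -/

private theorem ev_hom {G K : Type*} [Group G] [Group K] (φ : G →* K) (u v : G) (w : F2) :
    φ (ev w u v) = ev w (φ u) (φ v) := by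
  have h : φ.comp (FreeGroup.lift fun b : Bool => if b then u else v) =
      FreeGroup.lift fun b : Bool => if b then φ u else φ v := by
    apply FreeGroup.ext_hom
    intro b
    cases b <;> simp
  exact DFunLike.congr_fun h w

private theorem ev_one {G : Type*} [Group G] (u : G) (w : F2) : ev w 1 u = u ^ cInt w := by
  have h : (FreeGroup.lift fun b : Bool => if b then (1 : G) else u) =
      (zpowersHom G u).comp
        (FreeGroup.lift fun b : Bool => if b then 1 else Multiplicative.ofAdd (1 : ℤ)) := by
    apply FreeGroup.ext_hom
    intro b
    cases b <;> simp [zpowersHom_apply]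
  show (FreeGroup.lift fun b : Bool => if b then (1 : G) else u) w = _
  rw [h]
  rfl

private theorem ev_mul {G : Type*} [Group G] (u v : G) (w w' : F2) :
    ev (w * w') u v = ev w u v * ev w' u v := map_mul _ _ _

private theorem ev_fy {G : Type*} [Group G] (u v : G) : ev fy u v = v := by simp [ev, fy]

private theorem ev_zpow {G : Type*} [Group G] (u v : G) (w : F2) (n : ℤ) :
    ev (w ^ n) u v = ev w u v ^ n := map_zpow _ _ _

private theorem ev_app (U V : Fin 4 → SL2) (i : Fin 4) (w : F2) :
    ev w U V i = ev w (U i) (V i) :=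
  ev_hom (Pi.evalMonoidHom (fun _ : Fin 4 => SL2) i) U V w

end Aux

/-- If `(f,h)` satisfies the mixed pentagon equation in `P₄`
(stated in `B₄ = Braid 3`, of which `P₄` is a subgroup), then `h = y^{c(h)} f` in `F₂`. -/
theorem statement_8 (f h : F2)
    (hpent : ev h (artin 3 0 1) (artin 3 1 2 * artin 3 1 3) *
        ev h (artin 3 0 2 * artin 3 1 2) (artin 3 2 3) =
      ev f (artin 3 1 2) (artin 3 2 3) *
        ev h (artin 3 0 1 * artin 3 0 2) (artin 3 1 3 * artin 3 2 3) *
        ev h (artin 3 0 1) (artin 3 1 2)) :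
    h = fy ^ cInt h * f := by
  classical
  set m : ℤ := cInt h with hm
  -- push the relation through `Phi` into the wreath product, then read off coordinate `0`
  have key := congrArg Phi hpent
  simp only [map_mul, ev_hom Phi, Phi_x01, Phi_x02, Phi_x12, Phi_x13, Phi_x23] at key
  simp only [← map_mul (SemidirectProduct.inl (φ := permHom)),
    ← ev_hom (SemidirectProduct.inl (φ := permHom))] at key
  have keyP := SemidirectProduct.inl_injective key
  have key0 := congrFun keyP 0
  simp only [Pi.mul_apply, ev_app, V01, V02, V12, V13, V23,
    Matrix.cons_val_zero, one_mul] at key0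
  -- now `key0` is an identity in `SL₂(ℤ)`
  rw [ev_one, ev_one, ev_one, ← hm] at key0
  -- use that `MZ = MA * MAt * MB` is central
  have hZ1 : MA * MAt = MZ * MB⁻¹ := by rw [← AAtB]; group
  have hZ2 : MAt * MB = MA⁻¹ * MZ := by rw [← AAtB]; group
  rw [hZ1, hZ2, (MZ_comm MB⁻¹).mul_zpow, ((MZ_comm MA⁻¹).symm).mul_zpow] at key0
  have e2 : ev f MA MB * ((MA⁻¹) ^ m * MZ ^ m) * MA ^ m = MZ ^ m * ev f MA MB := by
    have c1 : Commute (MZ ^ m) (ev f MA MB) := ((MZ_comm _).zpow_left m)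
    have c2 : Commute (MZ ^ m) ((MA : SL2) ^ m)⁻¹ := ((MZ_comm _).zpow_left m)
    calc ev f MA MB * ((MA⁻¹) ^ m * MZ ^ m) * MA ^ m
        = ev f MA MB * (((MA : SL2) ^ m)⁻¹ * MZ ^ m) * MA ^ m := by rw [inv_zpow]
      _ = ev f MA MB * (MZ ^ m * ((MA : SL2) ^ m)⁻¹) * MA ^ m := by rw [c2.eq]
      _ = ev f MA MB * MZ ^ m * (((MA : SL2) ^ m)⁻¹ * MA ^ m) := by group
      _ = MZ ^ m * ev f MA MB := by rw [inv_mul_cancel, mul_one, c1.eq]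
  rw [e2, mul_assoc] at key0
  have key1 : (MB⁻¹ : SL2) ^ m * ev h MA MB = ev f MA MB := mul_left_cancel key0
  rw [inv_zpow, inv_mul_eq_iff_eq_mul] at key1
  -- conclude by freeness of `⟨MA, MB⟩`
  apply lift_AB_injective
  show ev h MA MB = ev (fy ^ cInt h * f) MA MB
  rw [ev_mul, ev_zpow, ev_fy, ← hm, key1]
end

section
/- Let d ≥ 1 and let κ : F₂ → F₂ be the endomorphism determined by κ(x) = x^{−1} y^{−1} and κ(y) = y. Then κ(ker φ_d) ⊆ ker φ_d, and for every g ∈ ker φ_d one has δ_d(κ(g)) = κ(δ_d(g)). -/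
/-- The endomorphism `κ` of `F₂` with `κ(x) = x⁻¹y⁻¹`, `κ(y) = y`. -/
def kappa : F2 →* F2 :=
  FreeGroup.lift (fun b => if b then fx⁻¹ * fy⁻¹ else fy)

namespace S9
def H (d : ℕ) : Subgroup F2 :=
  Subgroup.closure (insert (fx ^ d) {w | ∃ α < d, w = fx ^ α * fy * (fx ^ α)⁻¹})

lemma X_mem (d : ℕ) : fx ^ d ∈ H d :=
  Subgroup.subset_closure (Set.mem_insert _ _)

lemma Y_mem (d : ℕ) {α : ℕ} (hα : α < d) : fx ^ α * fy * (fx ^ α)⁻¹ ∈ H d :=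
  Subgroup.subset_closure (Set.mem_insert_iff.2 (Or.inr ⟨α, hα, rfl⟩))

lemma fy_mem (d : ℕ) (hd : 1 ≤ d) : fy ∈ H d := by
  have := Y_mem d hd
  simpa using this

lemma conj_x_mem (d : ℕ) (hd : 1 ≤ d) {n : F2} (hn : n ∈ H d) :
    fx * n * fx⁻¹ ∈ H d := by
  induction hn using Subgroup.closure_induction with
  | one => simpa using one_mem (H d)
  | mul a b _ _ ha hb =>
      have : fx * (a * b) * fx⁻¹ = (fx * a * fx⁻¹) * (fx * b * fx⁻¹) := by group
      rw [this]; exact mul_mem ha hb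
  | inv a _ ha =>
      have : fx * a⁻¹ * fx⁻¹ = (fx * a * fx⁻¹)⁻¹ := by group
      rw [this]; exact inv_mem ha
  | mem w hw =>
      rcases hw with rfl | ⟨α, hα, rfl⟩
      · have : fx * fx ^ d * fx⁻¹ = fx ^ d := by group
        rw [this]; exact X_mem d
      · rcases eq_or_lt_of_le (Nat.succ_le_of_lt hα) with h | h
        · -- α + 1 = d
          have h' : α + 1 = d := by omega
          have : fx * (fx ^ α * fy * (fx ^ α)⁻¹) * fx⁻¹
              = fx ^ d * (fx ^ 0 * fy * (fx ^ 0)⁻¹) * (fx ^ d)⁻¹ := by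
            rw [← h']; group
          rw [this]
          exact mul_mem (mul_mem (X_mem d) (Y_mem d hd)) (inv_mem (X_mem d))
        · have : fx * (fx ^ α * fy * (fx ^ α)⁻¹) * fx⁻¹
              = fx ^ (α + 1) * fy * (fx ^ (α + 1))⁻¹ := by group
          rw [this]; exact Y_mem d h

lemma conj_xinv_mem (d : ℕ) (hd : 1 ≤ d) {n : F2} (hn : n ∈ H d) :
    fx⁻¹ * n * fx ∈ H d := by
  induction hn using Subgroup.closure_induction with
  | one => simpa using one_mem (H d)
  | mul a b _ _ ha hb =>
      have : fx⁻¹ * (a * b) * fx = (fx⁻¹ * a * fx) * (fx⁻¹ * b * fx) := by group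
      rw [this]; exact mul_mem ha hb
  | inv a _ ha =>
      have : fx⁻¹ * a⁻¹ * fx = (fx⁻¹ * a * fx)⁻¹ := by group
      rw [this]; exact inv_mem ha
  | mem w hw =>
      rcases hw with rfl | ⟨α, hα, rfl⟩
      · have : fx⁻¹ * fx ^ d * fx = fx ^ d := by group
        rw [this]; exact X_mem d
      · rcases Nat.eq_zero_or_pos α with rfl | h
        · obtain ⟨e, rfl⟩ := Nat.exists_eq_add_of_le hd  -- d = 1 + e
          have : fx⁻¹ * (fx ^ 0 * fy * (fx ^ 0)⁻¹) * fx
              = (fx ^ (1 + e))⁻¹ * (fx ^ e * fy * (fx ^ e)⁻¹) * fx ^ (1 + e) := by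
            group
          rw [this]
          exact mul_mem (mul_mem (inv_mem (X_mem _)) (Y_mem _ (by omega))) (X_mem _)
        · obtain ⟨β, rfl⟩ := Nat.exists_eq_add_of_le h  -- α = 1 + β
          have : fx⁻¹ * (fx ^ (1 + β) * fy * (fx ^ (1 + β))⁻¹) * fx
              = fx ^ β * fy * (fx ^ β)⁻¹ := by group
          rw [this]; exact Y_mem d (by omega)

lemma H_normal (d : ℕ) (hd : 1 ≤ d) : (H d).Normal := by
  constructor
  intro n hn g
  -- prove by induction on g the two-sided statement
  have key : ∀ g : F2, (∀ n ∈ H d, g * n * g⁻¹ ∈ H d) ∧ (∀ n ∈ H d, g⁻¹ * n * g ∈ H d) := by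
    intro g
    induction g using FreeGroup.induction_on with
    | C1 => constructor <;> intro n hn <;> simpa using hn
    | of b =>
        cases b
        · refine ⟨fun n hn => ?_, fun n hn => ?_⟩
          · exact mul_mem (mul_mem (fy_mem d hd) hn) (inv_mem (fy_mem d hd))
          · exact mul_mem (mul_mem (inv_mem (fy_mem d hd)) hn) (fy_mem d hd)
        · exact ⟨fun n hn => conj_x_mem d hd hn, fun n hn => conj_xinv_mem d hd hn⟩
    | inv_of b ih =>
        refine ⟨fun n hn => ?_, fun n hn => ?_⟩
        · simpa using ih.2 n hn
        · simpa using ih.1 n hn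
    | mul a b iha ihb =>
        refine ⟨fun n hn => ?_, fun n hn => ?_⟩
        · have : a * b * n * (a * b)⁻¹ = a * (b * n * b⁻¹) * a⁻¹ := by group
          rw [this]; exact iha.1 _ (ihb.1 n hn)
        · have : (a * b)⁻¹ * n * (a * b) = b⁻¹ * (a⁻¹ * n * a) * b := by group
          rw [this]; exact ihb.2 _ (iha.2 n hn)
  exact (key g).1 n hn

lemma ker_le_H (d : ℕ) (hd : 1 ≤ d) : (phi d).ker ≤ H d := by
  haveI := H_normal d hd
  set q := QuotientGroup.mk' (H d) with hq
  have hyd : q (fx ^ d) = 1 := (QuotientGroup.eq_one_iff _).2 (X_mem d)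
  have hy : q fy = 1 := (QuotientGroup.eq_one_iff _).2 (fy_mem d hd)
  -- build τ : ZMod d →+ Additive (F2 ⧸ H d)
  set f : ℤ →+ Additive (F2 ⧸ H d) :=
    AddMonoidHom.mk' (fun n => Additive.ofMul ((q fx) ^ n)) (by
      intro a b; simp [zpow_add]) with hf
  have hfd : f (d : ℤ) = 0 := by
    simp only [hf, AddMonoidHom.mk'_apply, zpow_natCast]
    rw [← map_pow]
    rw [hyd]; rfl
  set τ : ZMod d →+ Additive (F2 ⧸ H d) := ZMod.lift d ⟨f, hfd⟩ with hτ
  have key : ∀ g : F2, q g = (τ (Multiplicative.toAdd (phi d g))).toMul := by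
    have : q = (MonoidHom.comp (AddMonoidHom.toMultiplicativeLeft τ) (phi d)) := by
      apply FreeGroup.ext_hom
      intro b
      cases b
      · simpa [phi, fy] using hy
      · show q fx = (τ (Multiplicative.toAdd (phi d fx))).toMul
        have h1 : Multiplicative.toAdd (phi d fx) = ((1 : ℤ) : ZMod d) := by
          simp [phi, fx]
        rw [h1, hτ, ZMod.lift_coe]
        simp [hf]
    intro g
    rw [this]
    rfl
  intro g hg
  have hg1 : phi d g = 1 := MonoidHom.mem_ker.1 hg
  have h1 : q g = 1 := by
    rw [key g, hg1]
    simp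
  exact (QuotientGroup.eq_one_iff g).1 h1

end S9

/-- `κ` maps `ker φ_d` into itself, and commutes with the homomorphism
`δ_d : ker φ_d → F₂` determined by `δ_d(x^d) = x`, `δ_d(y) = y`,
`δ_d(x^α y x^{−α}) = 1` for `1 ≤ α ≤ d−1`. -/
theorem statement_9 (d : ℕ) (hd : 1 ≤ d) :
    (∀ g ∈ (phi d).ker, kappa g ∈ (phi d).ker) ∧
    ∀ δ : (phi d).ker →* F2,
      (∀ h : fx ^ d ∈ (phi d).ker, δ ⟨fx ^ d, h⟩ = fx) →
      (∀ h : fy ∈ (phi d).ker, δ ⟨fy, h⟩ = fy) →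
      (∀ α : ℕ, 1 ≤ α → α ≤ d - 1 →
        ∀ h : fx ^ α * fy * (fx ^ α)⁻¹ ∈ (phi d).ker,
          δ ⟨fx ^ α * fy * (fx ^ α)⁻¹, h⟩ = 1) →
      ∀ (g : F2) (hg : g ∈ (phi d).ker) (hg' : kappa g ∈ (phi d).ker),
        δ ⟨kappa g, hg'⟩ = kappa (δ ⟨g, hg⟩) := by
  have hphikappa : ∀ g : F2, phi d (kappa g) = (phi d g)⁻¹ := by
    have : (phi d).comp kappa = (invMonoidHom).comp (phi d) := by
      apply FreeGroup.ext_hom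
      intro b
      cases b <;> simp [phi, kappa, fx, fy]
    exact fun g => DFunLike.congr_fun this g
  have part1 : ∀ g ∈ (phi d).ker, kappa g ∈ (phi d).ker := by
    intro g hg
    have hg1 : phi d g = 1 := MonoidHom.mem_ker.1 hg
    exact MonoidHom.mem_ker.2 (by rw [hphikappa, hg1, inv_one])
  refine ⟨part1, ?_⟩
  intro δ hX hY0 hYα g₀ hg₀ hg₀'
  -- membership facts
  have kX : fx ^ d ∈ (phi d).ker := by
    simp only [MonoidHom.mem_ker, map_pow]
    simp only [phi, fx, FreeGroup.lift_apply_of, if_true]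
    rw [← ofAdd_nsmul]
    simp [ZMod.natCast_self]
  have ky : fy ∈ (phi d).ker := by
    simp [MonoidHom.mem_ker, phi, fy]
  have kY : ∀ α : ℕ, fx ^ α * fy * (fx ^ α)⁻¹ ∈ (phi d).ker := by
    intro α
    simp [MonoidHom.mem_ker, phi, fx, fy]
  -- kappa on generators
  have κx : kappa fx = fx⁻¹ * fy⁻¹ := by simp [kappa, fx]
  have κy : kappa fy = fy := by simp [kappa, fy, fx]
  -- the total version of δ
  set D : F2 → F2 := fun a => if h : a ∈ (phi d).ker then δ ⟨a, h⟩ else 1 with hD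
  have hDdef : ∀ (a : F2) (h : a ∈ (phi d).ker), δ ⟨a, h⟩ = D a := by
    intro a h
    show δ ⟨a, h⟩ = dite _ _ _
    rw [dif_pos h]
  have hD1 : D 1 = 1 := by
    rw [← hDdef 1 (one_mem _)]
    exact map_one δ
  have hDmul : ∀ a b : F2, a ∈ (phi d).ker → b ∈ (phi d).ker →
      D (a * b) = D a * D b := by
    intro a b ha hb
    rw [← hDdef a ha, ← hDdef b hb, ← hDdef (a * b) (mul_mem ha hb)]
    exact map_mul δ ⟨a, ha⟩ ⟨b, hb⟩
  have hDinv : ∀ a : F2, a ∈ (phi d).ker → D a⁻¹ = (D a)⁻¹ := by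
    intro a ha
    rw [← hDdef a ha, ← hDdef a⁻¹ (inv_mem ha)]
    exact map_inv δ ⟨a, ha⟩
  have hDX : D (fx ^ d) = fx := by rw [← hDdef _ kX]; exact hX kX
  have hDy : D fy = fy := by rw [← hDdef _ ky]; exact hY0 ky
  have hDY : ∀ α : ℕ, 1 ≤ α → α ≤ d - 1 → D (fx ^ α * fy * (fx ^ α)⁻¹) = 1 := by
    intro α h1 h2
    rw [← hDdef _ (kY α)]
    exact hYα α h1 h2 (kY α)
  -- value of D on conjugates X⁻¹ Y_β X
  have hDconj : ∀ β : ℕ, 1 ≤ β → β ≤ d - 1 →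
      D ((fx ^ d)⁻¹ * (fx ^ β * fy * (fx ^ β)⁻¹) * fx ^ d) = fx⁻¹ * 1 * fx := by
    intro β h1 h2
    rw [hDmul _ _ (mul_mem (inv_mem kX) (kY β)) kX,
        hDmul _ _ (inv_mem kX) (kY β), hDinv _ kX, hDX, hDY β h1 h2]
  -- W n := (fx⁻¹ fy⁻¹)^n * fx^n is in the kernel
  have kW : ∀ n : ℕ, (fx⁻¹ * fy⁻¹) ^ n * fx ^ n ∈ (phi d).ker := by
    intro n
    have p1 : phi d fx = Multiplicative.ofAdd 1 := by simp [phi, fx]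
    have p2 : phi d fy = 1 := by simp [phi, fy]
    simp only [MonoidHom.mem_ker, map_mul, map_pow, map_inv, p1, p2]
    group
  -- key identity for the inductive step
  have hid : ∀ β n : ℕ,
      (fx⁻¹ * fy⁻¹) ^ (n + 1) * fx ^ (n + 1)
      = ((fx⁻¹ * fy⁻¹) ^ n * fx ^ n) *
        ((fx ^ (β + (n + 1)))⁻¹ * (fx ^ β * fy * (fx ^ β)⁻¹) * fx ^ (β + (n + 1)))⁻¹ := by
    intro β n
    rw [pow_succ (fx⁻¹ * fy⁻¹) n, pow_succ fx n]
    group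
  have hW : ∀ n : ℕ, n ≤ d - 1 → D ((fx⁻¹ * fy⁻¹) ^ n * fx ^ n) = 1 := by
    intro n
    induction n with
    | zero =>
        intro _
        have : (fx⁻¹ * fy⁻¹) ^ 0 * fx ^ 0 = (1 : F2) := by group
        rw [this, hD1]
    | succ n ih =>
        intro hn
        have hβ : d - (n + 1) + (n + 1) = d := by omega
        have e := hid (d - (n + 1)) n
        rw [hβ] at e
        rw [e, hDmul _ _ (kW n)
          (inv_mem (mul_mem (mul_mem (inv_mem kX) (kY _)) kX)),
          hDinv _ (mul_mem (mul_mem (inv_mem kX) (kY _)) kX),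
          hDconj (d - (n + 1)) (by omega) (by omega), ih (by omega)]
        group
  -- D (kappa g) = kappa (D g) on the generators, then by closure induction
  have hHker : S9.H d ≤ (phi d).ker := by
    apply Subgroup.closure_le _ |>.2
    intro w hw
    rcases hw with rfl | ⟨α, hα, rfl⟩
    · exact kX
    · exact kY α
  have main : ∀ g ∈ S9.H d, D (kappa g) = kappa (D g) := by
    intro g hgH
    induction hgH using Subgroup.closure_induction with
    | one => simp only [map_one, hD1]
    | mul a b haH hbH iha ihb =>
        have ha : a ∈ (phi d).ker := hHker haH
        have hb : b ∈ (phi d).ker := hHker hbH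
        rw [map_mul, hDmul _ _ (part1 a ha) (part1 b hb), hDmul _ _ ha hb,
          map_mul, iha, ihb]
    | inv a haH iha =>
        have ha : a ∈ (phi d).ker := hHker haH
        rw [map_inv, hDinv _ (part1 a ha), hDinv _ ha, map_inv, iha]
    | mem w hw =>
        rcases hw with rfl | ⟨α, hα, rfl⟩
        · -- w = fx ^ d
          have hκ : kappa (fx ^ d) = (fx⁻¹ * fy⁻¹) ^ d := by rw [map_pow, κx]
          obtain ⟨e, rfl⟩ : ∃ e, d = e + 1 := ⟨d - 1, by omega⟩
          have e1 : (fx⁻¹ * fy⁻¹) ^ (e + 1)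
              = ((fx⁻¹ * fy⁻¹) ^ e * fx ^ e) * (fx ^ (e + 1))⁻¹ * fy⁻¹ := by
            rw [pow_succ (fx⁻¹ * fy⁻¹) e]
            group
          rw [hκ, e1, hDmul _ _ (mul_mem (kW e) (inv_mem kX)) (inv_mem ky),
            hDmul _ _ (kW e) (inv_mem kX), hDinv _ kX, hDinv _ ky,
            hW e (by omega), hDX, hDy, κx]
          group
        · -- w = fx ^ α * fy * (fx ^ α)⁻¹
          rcases Nat.eq_zero_or_pos α with rfl | hα1
          · have : fx ^ 0 * fy * (fx ^ 0)⁻¹ = fy := by group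
            rw [this, κy, hDy, κy]
          · have hκ : kappa (fx ^ α * fy * (fx ^ α)⁻¹)
                = (fx⁻¹ * fy⁻¹) ^ α * fy * ((fx⁻¹ * fy⁻¹) ^ α)⁻¹ := by
              rw [map_mul, map_mul, map_inv, map_pow, κx, κy]
            have hβ : d - α + α = d := by omega
            have e2 : (fx⁻¹ * fy⁻¹) ^ α * fy * ((fx⁻¹ * fy⁻¹) ^ α)⁻¹
                = ((fx⁻¹ * fy⁻¹) ^ α * fx ^ α) *
                  ((fx ^ (d - α + α))⁻¹ * (fx ^ (d - α) * fy * (fx ^ (d - α))⁻¹) *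
                    fx ^ (d - α + α)) *
                  ((fx⁻¹ * fy⁻¹) ^ α * fx ^ α)⁻¹ := by
              group
            rw [hβ] at e2
            have hconjmem : (fx ^ d)⁻¹ * (fx ^ (d - α) * fy * (fx ^ (d - α))⁻¹) * fx ^ d
                ∈ (phi d).ker := mul_mem (mul_mem (inv_mem kX) (kY _)) kX
            rw [hκ, e2, hDmul _ _ (mul_mem (kW α) hconjmem) (inv_mem (kW α)),
              hDmul _ _ (kW α) hconjmem, hDinv _ (kW α),
              hDconj (d - α) (by omega) (by omega), hW α (by omega),
              hDY α hα1 (by omega)]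
            rw [map_one]
            group
  rw [hDdef _ hg₀', hDdef _ hg₀]
  exact main g₀ (S9.ker_le_H d hd hg₀)
end

section
/- Let N = d·N' with d, N' ≥ 1, let λ₂, μ₂ ∈ ℤ with gcd(μ₂, d) = 1, and let g₁, g₂ ∈ ker φ_N. Set g = g₁(g₂ · x^{μ₂} · g₂^{−1}, y^{λ₂}) · g₂. Then g ∈ ker φ_N ⊆ ker φ_d, and c(δ_d(g)) = λ₂ · c(δ_d(g₁)) + c(δ_d(g₂)), where c : F₂ → ℤ is the homomorphism with c(x) = 0 and c(y) = 1. -/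
namespace St10

/-- The wreath-like group `(ZMod d → ℤ) ⋊ ZMod d`. -/
@[ext] structure Wd (d : ℕ) where
  f : ZMod d → ℤ
  a : ZMod d

variable {d : ℕ}

instance : Group (Wd d) where
  mul w1 w2 := ⟨fun i => w1.f i + w2.f (i - w1.a), w1.a + w2.a⟩
  one := ⟨fun _ => 0, 0⟩
  inv w := ⟨fun i => - w.f (i + w.a), - w.a⟩
  mul_assoc a b c := by
    ext i
    · show (a.f i + b.f (i - a.a)) + c.f (i - (a.a + b.a))
        = a.f i + (b.f (i - a.a) + c.f (i - a.a - b.a))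
      rw [sub_add_eq_sub_sub]; ring
    · show a.a + b.a + c.a = a.a + (b.a + c.a); rw [add_assoc]
  one_mul w := by
    ext i
    · show 0 + w.f (i - 0) = w.f i; rw [sub_zero, zero_add]
    · show 0 + w.a = w.a; rw [zero_add]
  mul_one w := by
    ext i
    · show w.f i + 0 = w.f i; rw [add_zero]
    · show w.a + 0 = w.a; rw [add_zero]
  inv_mul_cancel w := by
    ext i
    · show - w.f (i + w.a) + w.f (i - -w.a) = 0
      rw [sub_neg_eq_add]; ring
    · show -w.a + w.a = 0; ring

@[simp] lemma mul_f (w1 w2 : Wd d) : (w1 * w2).f = fun i => w1.f i + w2.f (i - w1.a) := rfl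
@[simp] lemma mul_a (w1 w2 : Wd d) : (w1 * w2).a = w1.a + w2.a := rfl
@[simp] lemma one_f : (1 : Wd d).f = fun _ => 0 := rfl
@[simp] lemma one_a : (1 : Wd d).a = 0 := rfl
@[simp] lemma inv_f (w : Wd d) : w⁻¹.f = fun i => - w.f (i + w.a) := rfl
@[simp] lemma inv_a (w : Wd d) : w⁻¹.a = - w.a := rfl


def e0 (d : ℕ) : ZMod d → ℤ := fun i => if i = 0 then 1 else 0

/-- The Magnus-type homomorphism `F₂ → Wd d`. -/
def Mg (d : ℕ) : F2 →* Wd d :=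
  FreeGroup.lift (fun b => if b then ⟨0, 1⟩ else ⟨e0 d, 0⟩)

@[simp] lemma Mg_x : Mg d fx = ⟨0, 1⟩ := by simp [Mg, fx]
@[simp] lemma Mg_y : Mg d fy = ⟨e0 d, 0⟩ := by simp [Mg, fy]

/-- `a ↦ ⟨0, a⟩` as a homomorphism. -/
def iota (d : ℕ) : Multiplicative (ZMod d) →* Wd d where
  toFun a := ⟨0, a.toAdd⟩
  map_one' := rfl
  map_mul' a b := by ext i <;> simp

/-- `f ↦ ⟨f, 0⟩` as a homomorphism. -/
def kappa (d : ℕ) : Multiplicative (ZMod d → ℤ) →* Wd d where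
  toFun f := ⟨f.toAdd, 0⟩
  map_one' := rfl
  map_mul' a b := by ext i <;> simp

@[simp] lemma iota_f (a : Multiplicative (ZMod d)) : (iota d a).f = 0 := rfl
@[simp] lemma iota_a (a : Multiplicative (ZMod d)) : (iota d a).a = a.toAdd := rfl
@[simp] lemma kappa_f (g : Multiplicative (ZMod d → ℤ)) : (kappa d g).f = g.toAdd := rfl
@[simp] lemma kappa_a (g : Multiplicative (ZMod d → ℤ)) : (kappa d g).a = 0 := rfl

/-- second-component projection -/
def projA (d : ℕ) : Wd d →* Multiplicative (ZMod d) where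
  toFun w := Multiplicative.ofAdd w.a
  map_one' := rfl
  map_mul' a b := rfl

@[simp] lemma phi_x (N : ℕ) : phi N fx = Multiplicative.ofAdd (1 : ZMod N) := by simp [phi, fx]
@[simp] lemma phi_y (N : ℕ) : phi N fy = 1 := by simp [phi, fy]

lemma projA_Mg : (projA d).comp (Mg d) = phi d := by
  apply FreeGroup.ext_hom
  rintro (_ | _) <;> simp [projA, Mg, phi] <;> rfl

lemma Mg_a (w : F2) : (Mg d w).a = (phi d w).toAdd := by
  have := DFunLike.congr_fun (projA_Mg (d := d)) w
  simpa [projA] using congrArg Multiplicative.toAdd this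

lemma Mg_a_ker {w : F2} (hw : w ∈ (phi d).ker) : (Mg d w).a = 0 := by
  rw [Mg_a, MonoidHom.mem_ker.mp hw]; rfl

def cHom : F2 →* Multiplicative ℤ :=
  FreeGroup.lift (fun b => if b then 1 else Multiplicative.ofAdd (1 : ℤ))

lemma cInt_eq (w : F2) : cInt w = (cHom w).toAdd := rfl

@[simp] lemma cInt_one : cInt 1 = 0 := by simp [cInt_eq]
@[simp] lemma cInt_mul (w1 w2 : F2) : cInt (w1 * w2) = cInt w1 + cInt w2 := by
  simp [cInt_eq]
@[simp] lemma cInt_inv (w : F2) : cInt w⁻¹ = - cInt w := by simp [cInt_eq]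
@[simp] lemma cInt_x : cInt fx = 0 := by simp [cInt_eq, cHom, fx]
@[simp] lemma cInt_y : cInt fy = 1 := by simp [cInt_eq, cHom, fy]

def sHom : F2 →* Multiplicative ℤ :=
  FreeGroup.lift (fun b => if b then Multiplicative.ofAdd (1 : ℤ) else 1)

def sInt (w : F2) : ℤ := (sHom w).toAdd

@[simp] lemma sInt_one : sInt 1 = 0 := by simp [sInt]
@[simp] lemma sInt_mul (w1 w2 : F2) : sInt (w1 * w2) = sInt w1 + sInt w2 := by simp [sInt]
@[simp] lemma sInt_inv (w : F2) : sInt w⁻¹ = - sInt w := by simp [sInt]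
@[simp] lemma sInt_x : sInt fx = 1 := by simp [sInt, sHom, fx]
@[simp] lemma sInt_y : sInt fy = 0 := by simp [sInt, sHom, fy]

lemma phi_eq_cast_sHom (d : ℕ) (w : F2) :
    phi d w = Multiplicative.ofAdd ((sInt w : ℤ) : ZMod d) := by
  have : phi d = (AddMonoidHom.toMultiplicative (Int.castAddHom (ZMod d))).comp sHom := by
    apply FreeGroup.ext_hom
    rintro (_ | _) <;> simp [sHom, phi] <;> rfl
  rw [this]; rfl


/-- The standard generating set of `ker φ_d`. -/
def S (d : ℕ) : Set F2 :=
  {w | w = fx ^ d ∨ w = fy ∨ ∃ α : ℕ, 1 ≤ α ∧ α ≤ d - 1 ∧ w = fx ^ α * fy * (fx ^ α)⁻¹}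

lemma S_sub_ker (d : ℕ) : S d ⊆ ((phi d).ker : Set F2) := by
  rintro w (rfl | rfl | ⟨α, h1, h2, rfl⟩) <;>
    simp [MonoidHom.mem_ker, ← ofAdd_nsmul, ZMod.natCast_self]

lemma closure_le_ker (d : ℕ) : Subgroup.closure (S d) ≤ (phi d).ker :=
  (Subgroup.closure_le _).mpr (S_sub_ker d)

lemma xd_mem (d : ℕ) : fx ^ d ∈ Subgroup.closure (S d) :=
  Subgroup.subset_closure (Or.inl rfl)

lemma fy_mem (d : ℕ) : fy ∈ Subgroup.closure (S d) :=
  Subgroup.subset_closure (Or.inr (Or.inl rfl))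

lemma conj_x_mem (d : ℕ) (hd : 1 ≤ d) {w : F2} (hw : w ∈ Subgroup.closure (S d)) :
    fx * w * fx⁻¹ ∈ Subgroup.closure (S d) := by
  induction hw using Subgroup.closure_induction with
  | one => simpa using Subgroup.one_mem _
  | mul x y hx hy px py =>
      have : fx * (x * y) * fx⁻¹ = (fx * x * fx⁻¹) * (fx * y * fx⁻¹) := by group
      rw [this]; exact mul_mem px py
  | inv x hx px =>
      have : fx * x⁻¹ * fx⁻¹ = (fx * x * fx⁻¹)⁻¹ := by group
      rw [this]; exact inv_mem px
  | mem s hs =>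
      rcases hs with rfl | rfl | ⟨α, h1, h2, rfl⟩
      · have : fx * fx ^ d * fx⁻¹ = fx ^ d := by group
        rw [this]; exact xd_mem d
      · rcases Nat.lt_or_ge 1 d with h | h
        · refine Subgroup.subset_closure (Or.inr (Or.inr ⟨1, le_refl 1, ?_, by group⟩))
          omega
        · have hd1 : d = 1 := by omega
          subst hd1
          have hfx : fx ∈ Subgroup.closure (S 1) := by
            have := xd_mem 1; rwa [pow_one] at this
          exact mul_mem (mul_mem hfx (fy_mem 1)) (inv_mem hfx)
      · rcases Nat.lt_or_ge (α + 1) d with h | h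
        · refine Subgroup.subset_closure (Or.inr (Or.inr ⟨α + 1, by omega, by omega, ?_⟩))
          rw [pow_succ']; group
        · have hα : α + 1 = d := by omega
          have : fx * (fx ^ α * fy * (fx ^ α)⁻¹) * fx⁻¹ = fx ^ d * fy * (fx ^ d)⁻¹ := by
            rw [← hα, pow_succ']; group
          rw [this]
          exact mul_mem (mul_mem (xd_mem d) (fy_mem d)) (inv_mem (xd_mem d))

lemma conj_xinv_mem (d : ℕ) (hd : 1 ≤ d) {w : F2} (hw : w ∈ Subgroup.closure (S d)) :
    fx⁻¹ * w * fx ∈ Subgroup.closure (S d) := by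
  obtain ⟨n, rfl⟩ : ∃ n, d = n + 1 := ⟨d - 1, by omega⟩
  induction hw using Subgroup.closure_induction with
  | one => simpa using Subgroup.one_mem _
  | mul x y hx hy px py =>
      have : fx⁻¹ * (x * y) * fx = (fx⁻¹ * x * fx) * (fx⁻¹ * y * fx) := by group
      rw [this]; exact mul_mem px py
  | inv x hx px =>
      have : fx⁻¹ * x⁻¹ * fx = (fx⁻¹ * x * fx)⁻¹ := by group
      rw [this]; exact inv_mem px
  | mem s hs =>
      have hmem : fx ^ n * fy * (fx ^ n)⁻¹ ∈ Subgroup.closure (S (n + 1)) := by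
        rcases Nat.eq_zero_or_pos n with rfl | hn
        · simpa using fy_mem 1
        · exact Subgroup.subset_closure (Or.inr (Or.inr ⟨n, by omega, by omega, rfl⟩))
      rcases hs with rfl | rfl | ⟨α, h1, h2, rfl⟩
      · have : fx⁻¹ * fx ^ (n + 1) * fx = fx ^ (n + 1) := by group
        rw [this]; exact xd_mem _
      · have : fx⁻¹ * fy * fx
            = (fx ^ (n + 1))⁻¹ * (fx ^ n * fy * (fx ^ n)⁻¹) * fx ^ (n + 1) := by
          rw [pow_succ]; group
        rw [this]
        exact mul_mem (mul_mem (inv_mem (xd_mem _)) hmem) (xd_mem _)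
      · obtain ⟨β, rfl⟩ : ∃ β, α = β + 1 := ⟨α - 1, by omega⟩
        rcases Nat.eq_zero_or_pos β with rfl | hβ
        · have : fx⁻¹ * (fx ^ 1 * fy * (fx ^ 1)⁻¹) * fx = fy := by group
          rw [this]; exact fy_mem _
        · refine Subgroup.subset_closure (Or.inr (Or.inr ⟨β, by omega, by omega, ?_⟩))
          rw [pow_succ]; group

lemma conj_zpow_mem (d : ℕ) (hd : 1 ≤ d) (k : ℤ) {w : F2} (hw : w ∈ Subgroup.closure (S d)) :
    fx ^ k * w * fx ^ (-k) ∈ Subgroup.closure (S d) := by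
  induction k using Int.induction_on with
  | zero => simpa using hw
  | succ n ih =>
      have : fx ^ ((n : ℤ) + 1) * w * fx ^ (-((n : ℤ) + 1))
          = fx * (fx ^ (n : ℤ) * w * fx ^ (-(n : ℤ))) * fx⁻¹ := by group
      rw [this]; exact conj_x_mem d hd ih
  | pred n ih =>
      have : fx ^ (-(n : ℤ) - 1) * w * fx ^ (-(-(n : ℤ) - 1))
          = fx⁻¹ * (fx ^ (-(n : ℤ)) * w * fx ^ (-(-(n : ℤ)))) * fx := by group
      rw [this]; exact conj_xinv_mem d hd ih

lemma key_mem (d : ℕ) (hd : 1 ≤ d) (w : F2) :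
    w * fx ^ (-(sInt w)) ∈ Subgroup.closure (S d) := by
  induction w using FreeGroup.induction_on with
  | C1 => simpa using Subgroup.one_mem _
  | of b =>
      cases b
      · show fy * fx ^ (-(sInt fy)) ∈ Subgroup.closure (S d)
        simpa using fy_mem d
      · show fx * fx ^ (-(sInt fx)) ∈ Subgroup.closure (S d)
        have : fx * fx ^ (-(sInt fx)) = 1 := by rw [sInt_x]; group
        rw [this]; exact Subgroup.one_mem _
  | inv_of b _ =>
      cases b
      · show fy⁻¹ * fx ^ (-(sInt fy⁻¹)) ∈ Subgroup.closure (S d)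
        simpa using inv_mem (fy_mem d)
      · show fx⁻¹ * fx ^ (-(sInt fx⁻¹)) ∈ Subgroup.closure (S d)
        have : fx⁻¹ * fx ^ (-(sInt fx⁻¹)) = 1 := by rw [sInt_inv, sInt_x]; group
        rw [this]; exact Subgroup.one_mem _
  | mul x y px py =>
      have heq : x * y * fx ^ (-(sInt (x * y)))
          = (x * fx ^ (-(sInt x))) * (fx ^ (sInt x) * (y * fx ^ (-(sInt y))) * fx ^ (-(sInt x))) := by
        rw [sInt_mul]; group
      rw [heq]
      exact mul_mem px (conj_zpow_mem d hd _ py)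

lemma ker_le_closure (d : ℕ) (hd : 1 ≤ d) : (phi d).ker ≤ Subgroup.closure (S d) := by
  intro w hw
  haveI : NeZero d := ⟨by omega⟩
  have h0 : ((sInt w : ℤ) : ZMod d) = 0 := by
    have := phi_eq_cast_sHom d w
    rw [MonoidHom.mem_ker.mp hw] at this
    have := congrArg Multiplicative.toAdd this
    simpa using this.symm
  obtain ⟨k, hk⟩ := (ZMod.intCast_zmod_eq_zero_iff_dvd _ _).mp h0
  have : w = (w * fx ^ (-(sInt w))) * fx ^ (sInt w) := by group
  rw [this]
  refine mul_mem (key_mem d hd w) ?_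
  rw [hk]
  have : fx ^ ((d : ℤ) * k) = (fx ^ d) ^ k := by
    rw [← zpow_natCast fx d, ← zpow_mul]
  rw [this]
  exact zpow_mem (xd_mem d) k


lemma Mg_xpow (d n : ℕ) : Mg d (fx ^ n) = ⟨0, (n : ZMod d)⟩ := by
  have : Mg d (fx ^ n) = iota d (Multiplicative.ofAdd (1 : ZMod d)) ^ n := by
    rw [map_pow, Mg_x]; rfl
  rw [this, ← map_pow]
  ext i
  · rfl
  · show Multiplicative.toAdd (Multiplicative.ofAdd (1 : ZMod d) ^ n) = _
    simp [← ofAdd_nsmul]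

lemma det (d : ℕ) (hd : 1 ≤ d) (δ : (phi d).ker →* F2)
    (hxd : ∀ h : fx ^ d ∈ (phi d).ker, δ ⟨fx ^ d, h⟩ = fx)
    (hy : ∀ h : fy ∈ (phi d).ker, δ ⟨fy, h⟩ = fy)
    (hconj : ∀ α : ℕ, 1 ≤ α → α ≤ d - 1 →
      ∀ h : fx ^ α * fy * (fx ^ α)⁻¹ ∈ (phi d).ker,
        δ ⟨fx ^ α * fy * (fx ^ α)⁻¹, h⟩ = 1) :
    ∀ w (hw : w ∈ (phi d).ker), cInt (δ ⟨w, hw⟩) = (Mg d w).f 0 := by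
  haveI : NeZero d := ⟨by omega⟩
  have main : ∀ w (hw' : w ∈ Subgroup.closure (S d)),
      ∀ hw : w ∈ (phi d).ker, cInt (δ ⟨w, hw⟩) = (Mg d w).f 0 := by
    intro w hw'
    induction hw' using Subgroup.closure_induction with
    | one =>
        intro hw
        have : (⟨(1 : F2), hw⟩ : (phi d).ker) = 1 := rfl
        rw [this, map_one]; simp
    | mul x y hx hy' px py =>
        intro hw
        have hxk := closure_le_ker d hx
        have hyk := closure_le_ker d hy'
        have : (⟨x * y, hw⟩ : (phi d).ker) = ⟨x, hxk⟩ * ⟨y, hyk⟩ := rfl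
        rw [this, map_mul, cInt_mul, px hxk, py hyk]
        simp [Mg_a_ker hxk]
    | inv x hx px =>
        intro hw
        have hxk := closure_le_ker d hx
        have : (⟨x⁻¹, hw⟩ : (phi d).ker) = (⟨x, hxk⟩ : (phi d).ker)⁻¹ := rfl
        rw [this, map_inv, cInt_inv, px hxk]
        simp [Mg_a_ker hxk]
    | mem s hs =>
        rcases hs with rfl | rfl | ⟨α, h1, h2, rfl⟩
        · intro hw
          rw [hxd hw, cInt_x, Mg_xpow]; rfl
        · intro hw
          rw [hy hw, cInt_y, Mg_y]
          simp [e0]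
        · intro hw
          rw [hconj α h1 h2 hw, cInt_one]
          have hne : ((α : ZMod d)) ≠ 0 := by
            rw [Ne, ZMod.natCast_eq_zero_iff]
            intro hdvd
            have := Nat.le_of_dvd (by omega) hdvd
            omega
          rw [map_mul, map_mul, map_inv, Mg_xpow, Mg_y]
          symm
          simp [e0, zero_sub, neg_eq_zero, hne]
  intro w hw
  exact main w (ker_le_closure d hd hw) hw


lemma Mg_xzpow (d : ℕ) (k : ℤ) : Mg d (fx ^ k) = ⟨0, (k : ZMod d)⟩ := by
  have : Mg d (fx ^ k) = iota d (Multiplicative.ofAdd (1 : ZMod d)) ^ k := by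
    rw [map_zpow, Mg_x]; rfl
  rw [this, ← map_zpow]
  ext i
  · rfl
  · show Multiplicative.toAdd (Multiplicative.ofAdd (1 : ZMod d) ^ k) = _
    simp [← ofAdd_zsmul]

lemma Mg_yzpow (d : ℕ) (k : ℤ) : Mg d (fy ^ k) = ⟨k • e0 d, 0⟩ := by
  have : Mg d (fy ^ k) = kappa d (Multiplicative.ofAdd (e0 d)) ^ k := by
    rw [map_zpow, Mg_y]; rfl
  rw [this, ← map_zpow]
  ext i
  · show (Multiplicative.toAdd (Multiplicative.ofAdd (e0 d) ^ k)) i = _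
    simp [← ofAdd_zsmul]
  · rfl

lemma conj_triv {d : ℕ} (w z : Wd d) (hw : w.a = 0) (hz : z.a = 0) : w * z * w⁻¹ = z := by
  ext i
  · show (w.f i + z.f (i - w.a)) + (fun j => - w.f (j + w.a)) (i - (w.a + z.a)) = z.f i
    rw [hw, hz]; simp
  · show w.a + z.a + -w.a = z.a
    rw [hw, hz]; simp

/-- The twisting endomorphism of `Wd d`. -/
def T (d : ℕ) (lam2 : ℤ) (μ ζ : ZMod d) (hζ : ζ * μ = 1) : Wd d →* Wd d where
  toFun w := ⟨fun i => lam2 * w.f (ζ * i), μ * w.a⟩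
  map_one' := by ext i <;> simp
  map_mul' w1 w2 := by
    ext i
    · show lam2 * (w1.f (ζ * i) + w2.f (ζ * i - w1.a))
        = lam2 * w1.f (ζ * i) + lam2 * w2.f (ζ * (i - μ * w1.a))
      have h : ζ * (i - μ * w1.a) = ζ * i - w1.a := by
        rw [mul_sub, ← mul_assoc, hζ, one_mul]
      rw [h]; ring
    · show μ * (w1.a + w2.a) = μ * w1.a + μ * w2.a
      ring

/-- evaluation as a homomorphism -/
def Ehom {G : Type*} [Group G] (u v : G) : F2 →* G :=
  FreeGroup.lift (fun b => if b then u else v)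

lemma ev_eq {G : Type*} [Group G] (w : F2) (u v : G) : ev w u v = Ehom u v w := rfl

@[simp] lemma Ehom_x {G : Type*} [Group G] (u v : G) : Ehom u v fx = u := by simp [Ehom, fx]
@[simp] lemma Ehom_y {G : Type*} [Group G] (u v : G) : Ehom u v fy = v := by simp [Ehom, fy]

lemma Mg_E (d : ℕ) (lam2 mu2 : ℤ) (ζ : ZMod d)
    (hζ : ζ * ((mu2 : ℤ) : ZMod d) = 1) (g2 : F2) (hg2 : g2 ∈ (phi d).ker) :
    (Mg d).comp (Ehom (g2 * fx ^ mu2 * g2⁻¹) (fy ^ lam2))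
      = ((MulAut.conj (Mg d g2)).toMonoidHom.comp
          ((T d lam2 ((mu2 : ℤ) : ZMod d) ζ hζ).comp (Mg d))) := by
  have hζ' : ((mu2 : ℤ) : ZMod d) * ζ = 1 := by rw [mul_comm]; exact hζ
  apply FreeGroup.ext_hom
  rintro (_ | _)
  · -- false : y
    show Mg d (Ehom _ _ fy) = Mg d g2 * (T d lam2 _ ζ hζ) (Mg d fy) * (Mg d g2)⁻¹
    rw [Ehom_y, Mg_yzpow, Mg_y]
    have hT : (T d lam2 ((mu2 : ℤ) : ZMod d) ζ hζ) ⟨e0 d, 0⟩ = ⟨lam2 • e0 d, 0⟩ := by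
      ext i
      · show lam2 * e0 d (ζ * i) = (lam2 • e0 d) i
        have : e0 d (ζ * i) = e0 d i := by
          unfold e0
          congr 1
          simp only [eq_iff_iff]
          constructor
          · intro h
            have := congrArg (fun j => ((mu2 : ℤ) : ZMod d) * j) h
            simpa [← mul_assoc, hζ'] using this
          · intro h; rw [h, mul_zero]
        rw [this]; simp [smul_eq_mul]
      · show ((mu2 : ℤ) : ZMod d) * 0 = 0; ring
    rw [hT]
    exact (conj_triv _ _ (Mg_a_ker hg2) rfl).symm
  · -- true : x
    show Mg d (Ehom _ _ fx) = Mg d g2 * (T d lam2 _ ζ hζ) (Mg d fx) * (Mg d g2)⁻¹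
    rw [Ehom_x, map_mul, map_mul, map_inv, Mg_xzpow, Mg_x]
    have hT : (T d lam2 ((mu2 : ℤ) : ZMod d) ζ hζ) ⟨0, 1⟩ = ⟨0, ((mu2 : ℤ) : ZMod d)⟩ := by
      ext i
      · show lam2 * (0 : ZMod d → ℤ) (ζ * i) = (0 : ZMod d → ℤ) i
        simp
      · show ((mu2 : ℤ) : ZMod d) * 1 = ((mu2 : ℤ) : ZMod d)
        ring
    rw [hT]

end St10

open St10 in
/-- The cocycle property of `g ↦ c(δ_d(g))` for the `GTM(N)` composition law, where
`δ_d : ker φ_d → F₂` is the homomorphism determined by `δ_d(x^d) = x`, `δ_d(y) = y`,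
`δ_d(x^α y x^{−α}) = 1` for `1 ≤ α ≤ d−1`. -/
theorem statement_10 (d N' N : ℕ) (hd : 1 ≤ d) (hN' : 1 ≤ N') (hN : N = d * N')
    (lam2 mu2 : ℤ) (hgcd : Int.gcd mu2 (d : ℤ) = 1)
    (g1 g2 : F2) (h1 : g1 ∈ (phi N).ker) (h2 : g2 ∈ (phi N).ker) :
    ∀ g : F2, g = ev g1 (g2 * fx ^ mu2 * g2⁻¹) (fy ^ lam2) * g2 →
      g ∈ (phi N).ker ∧
      (∀ w ∈ (phi N).ker, w ∈ (phi d).ker) ∧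
      ∀ δ : (phi d).ker →* F2,
        (∀ h : fx ^ d ∈ (phi d).ker, δ ⟨fx ^ d, h⟩ = fx) →
        (∀ h : fy ∈ (phi d).ker, δ ⟨fy, h⟩ = fy) →
        (∀ α : ℕ, 1 ≤ α → α ≤ d - 1 →
          ∀ h : fx ^ α * fy * (fx ^ α)⁻¹ ∈ (phi d).ker,
            δ ⟨fx ^ α * fy * (fx ^ α)⁻¹, h⟩ = 1) →
        ∀ (hg : g ∈ (phi d).ker) (hg1 : g1 ∈ (phi d).ker) (hg2 : g2 ∈ (phi d).ker),
          cInt (δ ⟨g, hg⟩) = lam2 * cInt (δ ⟨g1, hg1⟩) + cInt (δ ⟨g2, hg2⟩) := by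
  intro g hgdef
  haveI : NeZero d := ⟨by omega⟩
  set u : F2 := g2 * fx ^ mu2 * g2⁻¹ with hu
  set v : F2 := fy ^ lam2 with hv
  -- Part 1 : g ∈ ker (phi N)
  have habc : ∀ (a b : Multiplicative (ZMod N)), a * b * a⁻¹ = b := by
    intro a b; rw [mul_comm a b, mul_assoc, mul_inv_cancel, mul_one]
  have hcompN : (phi N).comp (Ehom u v) = (zpowGroupHom mu2).comp (phi N) := by
    apply FreeGroup.ext_hom
    rintro (_ | _)
    · show phi N (Ehom u v fy) = zpowGroupHom mu2 (phi N fy)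
      rw [Ehom_y, hv, map_zpow, phi_y]
      show (1 : Multiplicative (ZMod N)) ^ lam2 = (1 : Multiplicative (ZMod N)) ^ mu2
      simp
    · show phi N (Ehom u v fx) = zpowGroupHom mu2 (phi N fx)
      rw [Ehom_x, hu, map_mul, map_mul, map_inv, map_zpow]
      show phi N g2 * (phi N fx) ^ mu2 * (phi N g2)⁻¹ = (phi N fx) ^ mu2
      exact habc _ _
  have hgN : g ∈ (phi N).ker := by
    rw [MonoidHom.mem_ker, hgdef, map_mul, ev_eq]
    have := DFunLike.congr_fun hcompN g1
    simp only [MonoidHom.comp_apply] at this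
    rw [this, MonoidHom.mem_ker.mp h2, mul_one]
    show ((phi N) g1) ^ mu2 = 1
    rw [MonoidHom.mem_ker.mp h1, one_zpow]
  refine ⟨hgN, ?_, ?_⟩
  -- Part 2 : ker (phi N) ≤ ker (phi d)
  · have hdvd : d ∣ N := ⟨N', hN⟩
    have hcast : phi d = (AddMonoidHom.toMultiplicative
        ((ZMod.castHom hdvd (ZMod d)).toAddMonoidHom)).comp (phi N) := by
      apply FreeGroup.ext_hom
      rintro (_ | _) <;>
        simp [phi, AddMonoidHom.toMultiplicative, ZMod.castHom_apply, ZMod.cast_one hdvd]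
    intro w hw
    rw [MonoidHom.mem_ker, hcast, MonoidHom.comp_apply, MonoidHom.mem_ker.mp hw, map_one]
  -- Part 3
  · intro δ hxd hyd hconjd hg hg1 hg2
    obtain ⟨a, b, hab⟩ : IsCoprime mu2 (d : ℤ) := Int.isCoprime_iff_gcd_eq_one.mpr hgcd
    have hζ : ((a : ℤ) : ZMod d) * ((mu2 : ℤ) : ZMod d) = 1 := by
      have := congrArg (fun z : ℤ => ((z : ZMod d))) hab
      push_cast at this
      simpa [ZMod.natCast_self] using this
    have hME := Mg_E d lam2 mu2 ((a : ℤ) : ZMod d) hζ g2 hg2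
    have hE1 : Mg d (ev g1 u v) = (MulAut.conj (Mg d g2))
        ((T d lam2 ((mu2 : ℤ) : ZMod d) ((a : ℤ) : ZMod d) hζ) (Mg d g1)) := by
      rw [ev_eq, hu, hv]
      have := DFunLike.congr_fun hME g1
      simpa using this
    have hTa : ((T d lam2 ((mu2 : ℤ) : ZMod d) ((a : ℤ) : ZMod d) hζ) (Mg d g1)).a = 0 := by
      show ((mu2 : ℤ) : ZMod d) * (Mg d g1).a = 0
      rw [Mg_a_ker hg1, mul_zero]
    have hE1' : Mg d (ev g1 u v)
        = (T d lam2 ((mu2 : ℤ) : ZMod d) ((a : ℤ) : ZMod d) hζ) (Mg d g1) := by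
      rw [hE1, MulAut.conj_apply]
      exact conj_triv _ _ (Mg_a_ker hg2) hTa
    have hdet := det d hd δ hxd hyd hconjd
    rw [hdet g hg, hdet g1 hg1, hdet g2 hg2, hgdef, map_mul, hE1']
    show ((T d lam2 ((mu2 : ℤ) : ZMod d) ((a : ℤ) : ZMod d) hζ) (Mg d g1)).f 0
        + (Mg d g2).f (0 - ((T d lam2 ((mu2 : ℤ) : ZMod d) ((a : ℤ) : ZMod d) hζ) (Mg d g1)).a)
        = lam2 * (Mg d g1).f 0 + (Mg d g2).f 0
    rw [hTa, sub_zero]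
    show lam2 * (Mg d g1).f (((a : ℤ) : ZMod d) * 0) + (Mg d g2).f 0
        = lam2 * (Mg d g1).f 0 + (Mg d g2).f 0
    rw [mul_zero]
end

section
/- Let f > 1 and let χ be a primitive Dirichlet character modulo f which is nontrivial and even, i.e. χ(−1) = 1. Then Σ_{k ∈ (ℤ/fℤ)^×} χ(k) · log|1 − e^{2πik/f}| ≠ 0. -/
open Finset Filter Topology Complex

namespace S16

noncomputable def u (s : ℝ) (n : ℕ) : ℝ := (n : ℝ) ^ (-s)

noncomputable def Fterm (c : ℕ → ℂ) (s : ℝ) (n : ℕ) : ℂ :=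
  (∑ k ∈ range (n+1), c k) * ((u s n - u s (n+1) : ℝ) : ℂ)

variable {c : ℕ → ℂ} {C : ℝ}

lemma u_diff_le {s : ℝ} (hs : s ∈ Set.Icc (1:ℝ) 2) (n : ℕ) (hn : 1 ≤ n) :
    u s n - u s (n+1) ≤ 2 / (n:ℝ)^2 ∧ 0 ≤ u s n - u s (n+1) := by
  obtain ⟨hs1, hs2⟩ := hs
  have hn0 : (0:ℝ) < n := by exact_mod_cast hn
  have hn1 : (1:ℝ) ≤ n := by exact_mod_cast hn
  have h1 : u s (n+1) ≤ u s n := by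
    rw [u, u, Real.rpow_neg (by positivity), Real.rpow_neg (by positivity)]
    have : (n:ℝ) ^ s ≤ ((n:ℕ)+1:ℝ) ^ s := by
      apply Real.rpow_le_rpow (by positivity) (by push_cast; linarith) (by linarith)
    push_cast
    exact inv_anti₀ (by positivity) (by push_cast at this ⊢; linarith)
  refine ⟨?_, by linarith⟩
  have hun : u s n ≤ 1 / n := by
    rw [u, Real.rpow_neg (by positivity)]
    rw [one_div]
    apply inv_anti₀ hn0
    calc (n:ℝ) = (n:ℝ) ^ (1:ℝ) := (Real.rpow_one _).symm
    _ ≤ (n:ℝ) ^ s := Real.rpow_le_rpow_of_exponent_le hn1 hs1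
  set x : ℝ := (n:ℝ) / ((n:ℝ)+1) with hx
  have hx0 : 0 < x := by positivity
  have hx1 : x ≤ 1 := by rw [hx, div_le_one (by linarith)]; linarith
  have hrw : u s (n+1) = u s n * x ^ s := by
    rw [u, u, hx, Real.div_rpow (by positivity) (by positivity),
      Real.rpow_neg (by positivity), Real.rpow_neg (by positivity)]
    push_cast
    field_simp
  have hxs : x ^ (2:ℝ) ≤ x ^ s := Real.rpow_le_rpow_of_exponent_ge hx0 hx1 hs2
  have hx2 : x ^ (2:ℝ) = x ^ (2:ℕ) := by
    rw [← Real.rpow_natCast x 2]; norm_num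
  have hfac : 1 - x ^ (2:ℕ) ≤ 2 / ((n:ℝ)+1) := by
    have h1x : 1 - x = 1 / ((n:ℝ)+1) := by rw [hx]; field_simp; ring
    have hsq : 1 - x ^ (2:ℕ) = (1 - x) * (1 + x) := by ring
    rw [hsq, h1x]
    have : (1:ℝ) + x ≤ 2 := by linarith
    calc 1 / ((n:ℝ)+1) * (1 + x) ≤ 1 / ((n:ℝ)+1) * 2 := by
          apply mul_le_mul_of_nonneg_left this (by positivity)
    _ = 2 / ((n:ℝ)+1) := by ring
  have hu0 : 0 ≤ u s n := Real.rpow_nonneg (by positivity) _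
  calc u s n - u s (n+1) = u s n * (1 - x ^ s) := by rw [hrw]; ring
  _ ≤ (1/n) * (2 / ((n:ℝ)+1)) := by
      apply mul_le_mul hun ?_ ?_ (by positivity)
      · rw [hx2] at hxs; linarith
      · have : x ^ s ≤ 1 := Real.rpow_le_one hx0.le hx1 (by linarith)
        linarith
  _ ≤ 2 / (n:ℝ)^2 := by
      rw [div_mul_div_comm, one_mul]
      gcongr
      nlinarith

lemma norm_Fterm_le (hc0 : c 0 = 0) (hC : ∀ N, ‖∑ n ∈ range N, c n‖ ≤ C)
    {s : ℝ} (hs : s ∈ Set.Icc (1:ℝ) 2) (n : ℕ) :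
    ‖Fterm c s n‖ ≤ 2 * C / (n:ℝ)^2 := by
  rcases Nat.eq_zero_or_pos n with rfl | hn
  · simp [Fterm, sum_range_succ, hc0]
  · obtain ⟨h1, h2⟩ := u_diff_le hs n hn
    rw [Fterm, norm_mul, Complex.norm_real, Real.norm_of_nonneg h2]
    have hC' := hC (n+1)
    calc ‖∑ k ∈ range (n+1), c k‖ * (u s n - u s (n+1)) ≤ C * (2 / (n:ℝ)^2) := by
          apply mul_le_mul hC' h1 h2 ((norm_nonneg _).trans hC')
    _ = 2 * C / (n:ℝ)^2 := by ring

lemma summable_bound : Summable (fun n : ℕ => 2 * C / (n:ℝ)^2) := by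
  simp_rw [div_eq_mul_inv, ← one_div]
  exact (Real.summable_one_div_nat_pow.mpr one_lt_two).mul_left _

lemma summable_Fterm (hc0 : c 0 = 0) (hC : ∀ N, ‖∑ n ∈ range N, c n‖ ≤ C)
    {s : ℝ} (hs : s ∈ Set.Icc (1:ℝ) 2) : Summable (Fterm c s) :=
  Summable.of_norm_bounded summable_bound (norm_Fterm_le hc0 hC hs)

lemma partial_sum_eq (c : ℕ → ℂ) (s : ℝ) (N : ℕ) :
    ∑ n ∈ range N, c n * ((u s n : ℝ) : ℂ) =
      (∑ n ∈ range N, c n) * ((u s N : ℝ) : ℂ) + ∑ n ∈ range N, Fterm c s n := by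
  induction N with
  | zero => simp
  | succ N ih =>
    rw [sum_range_succ, ih]
    simp only [Fterm, sum_range_succ]
    push_cast
    ring

lemma tendsto_u_zero {s : ℝ} (hs : 0 < s) :
    Tendsto (fun N : ℕ => u s N) atTop (𝓝 0) :=
  (tendsto_rpow_neg_atTop hs).comp tendsto_natCast_atTop_atTop

lemma tendsto_partial_sums (hc0 : c 0 = 0) (hC : ∀ N, ‖∑ n ∈ range N, c n‖ ≤ C)
    {s : ℝ} (hs : s ∈ Set.Icc (1:ℝ) 2) :
    Tendsto (fun N : ℕ => ∑ n ∈ range N, c n * ((u s n : ℝ) : ℂ)) atTop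
      (𝓝 (∑' n, Fterm c s n)) := by
  have h1 : Tendsto (fun N : ℕ => (∑ n ∈ range N, c n) * ((u s N : ℝ) : ℂ)) atTop (𝓝 0) := by
    apply squeeze_zero_norm (a := fun N => C * u s N)
    · intro N
      have h0 : 0 ≤ u s N := by rw [u]; positivity
      rw [norm_mul, Complex.norm_real, Real.norm_of_nonneg h0]
      exact mul_le_mul_of_nonneg_right (hC N) h0
    · rw [show (0:ℝ) = C * 0 by ring]
      exact (tendsto_u_zero (by linarith [hs.1])).const_mul C
  have h2 := (summable_Fterm hc0 hC hs).hasSum.tendsto_sum_nat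
  simpa using (h1.add h2).congr (fun N => (partial_sum_eq c s N).symm)

lemma tendsto_H (hc0 : c 0 = 0) (hC : ∀ N, ‖∑ n ∈ range N, c n‖ ≤ C) :
    Tendsto (fun s : ℝ => ∑' n, Fterm c s n) (𝓝[>] (1:ℝ))
      (𝓝 (∑' n, Fterm c 1 n)) := by
  refine tendsto_tsum_of_dominated_convergence (f := fun (s : ℝ) (n : ℕ) => Fterm c s n)
    (bound := fun n : ℕ => 2 * C / (n:ℝ)^2) summable_bound ?_ ?_
  · intro n
    rcases Nat.eq_zero_or_pos n with rfl | hn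
    · have : ∀ s : ℝ, Fterm c s 0 = 0 := by
        intro s; simp [Fterm, sum_range_succ, hc0]
      simp only [this]
      exact tendsto_const_nhds
    · apply Tendsto.mono_left ?_ nhdsWithin_le_nhds
      have hn0 : (0:ℝ) < (n:ℝ) := by exact_mod_cast hn
      apply ContinuousAt.tendsto
      apply ContinuousAt.mul continuousAt_const
      apply Complex.continuous_ofReal.continuousAt.comp
      apply ContinuousAt.sub
      · exact (Real.continuousAt_const_rpow hn0.ne').comp continuous_neg.continuousAt
      · have : ((n:ℝ)+1) ≠ 0 := by positivity
        exact (Real.continuousAt_const_rpow (by push_cast; exact this)).comp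
          continuous_neg.continuousAt
  · filter_upwards [Ioo_mem_nhdsGT_of_mem (Set.mem_Ico.mpr ⟨le_refl (1:ℝ), one_lt_two⟩)]
      with s hs
    exact norm_Fterm_le hc0 hC ⟨hs.1.le, hs.2.le⟩

lemma sum_range_eq_sum_zmod {M : Type*} [AddCommMonoid M] (f : ℕ) [NeZero f] (g : ZMod f → M) :
    ∑ i ∈ range f, g (i : ZMod f) = ∑ j : ZMod f, g j := by
  refine Finset.sum_nbij' (fun i => ((i : ZMod f))) (fun j => j.val) ?_ ?_ ?_ ?_ ?_
  · intros; exact mem_univ _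
  · intro j _; exact mem_range.mpr (ZMod.val_lt j)
  · intro i hi; exact ZMod.val_natCast_of_lt (mem_range.mp hi)
  · intro j _; exact ZMod.natCast_rightInverse j
  · intros; rfl

variable {f : ℕ} [NeZero f]

lemma sum_units_eq (χ : DirichletCharacter ℂ f) (F : ZMod f → ℂ) :
    ∑ k : (ZMod f)ˣ, χ (k : ZMod f) * F (k : ZMod f) = ∑ j : ZMod f, χ j * F j := by
  have himg : ∑ j : ZMod f, χ j * F j
      = ∑ j ∈ Finset.univ.image (fun k : (ZMod f)ˣ => (k : ZMod f)), χ j * F j := by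
    symm
    apply Finset.sum_subset (Finset.subset_univ _)
    intro j _ hj
    have : ¬ IsUnit j := by
      contrapose! hj
      exact Finset.mem_image.mpr ⟨hj.unit, mem_univ _, rfl⟩
    rw [χ.map_nonunit this, zero_mul]
  rw [himg, Finset.sum_image (fun a _ b _ h => Units.ext h)]

lemma char_partial_sum_bound (ψ : DirichletCharacter ℂ f) (hψ : ψ ≠ 1) (N : ℕ) :
    ‖∑ n ∈ range N, ψ (n : ZMod f)‖ ≤ ∑ n ∈ range f, ‖ψ ((n : ZMod f))‖ := by
  have hper : ∀ M : ℕ, ∑ n ∈ range (M + f), ψ (n : ZMod f) = ∑ n ∈ range M, ψ (n : ZMod f) := by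
    intro M
    rw [Finset.sum_range_add]
    have : ∑ i ∈ range f, ψ ((M + i : ℕ) : ZMod f) = 0 := by
      have h1 : ∀ i : ℕ, ((M + i : ℕ) : ZMod f) = (M : ZMod f) + (i : ZMod f) := by
        intro i; push_cast; ring
      simp_rw [h1]
      rw [sum_range_eq_sum_zmod f (fun j => ψ ((M : ZMod f) + j))]
      rw [Fintype.sum_equiv (Equiv.addLeft ((M : ZMod f))) _ (fun j => ψ j)
        (fun j => by simp)]
      exact MulChar.sum_eq_zero_of_ne_one hψ
    rw [this, add_zero]
  induction N using Nat.strong_induction_on with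
  | _ N ih =>
    rcases lt_or_ge N f with h | h
    · calc ‖∑ n ∈ range N, ψ (n : ZMod f)‖ ≤ ∑ n ∈ range N, ‖ψ (n : ZMod f)‖ :=
          norm_sum_le _ _
      _ ≤ ∑ n ∈ range f, ‖ψ (n : ZMod f)‖ :=
          Finset.sum_le_sum_of_subset_of_nonneg (Finset.range_subset_range.mpr h.le)
            (fun _ _ _ => norm_nonneg _)
    · have hN : N = (N - f) + f := by omega
      rw [hN, hper]
      exact ih _ (by have := NeZero.pos f; omega)

lemma term_eq (ψ : DirichletCharacter ℂ f) (hc0 : ψ ((0:ℕ) : ZMod f) = 0)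
    {s : ℝ} (hs : 1 ≤ s) (n : ℕ) :
    LSeries.term (fun m : ℕ => ψ (m : ZMod f)) (s : ℂ) n
      = ψ (n : ZMod f) * ((u s n : ℝ) : ℂ) := by
  rcases Nat.eq_zero_or_pos n with rfl | hn
  · rw [LSeries.term_zero, hc0, zero_mul]
  · rw [LSeries.term_of_ne_zero hn.ne']
    rw [u, show ((((n:ℝ) ^ (-s) : ℝ)) : ℂ) = ((n:ℝ):ℂ) ^ ((-s : ℝ) : ℂ) from
      Complex.ofReal_cpow (Nat.cast_nonneg n) _]
    push_cast
    rw [Complex.cpow_neg, div_eq_mul_inv]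

lemma Heq_LFunction (ψ : DirichletCharacter ℂ f) (hc0 : ψ ((0:ℕ) : ZMod f) = 0)
    (hC : ∀ N, ‖∑ n ∈ range N, ψ (n : ZMod f)‖ ≤ C)
    {s : ℝ} (hs : s ∈ Set.Ioc (1:ℝ) 2) :
    (∑' n, Fterm (fun m : ℕ => ψ (m : ZMod f)) s n) = DirichletCharacter.LFunction ψ (s : ℂ) := by
  have hre : 1 < (s:ℂ).re := by simpa using hs.1
  have hsum : LSeriesSummable (fun m : ℕ => ψ (m : ZMod f)) (s : ℂ) :=
    ZMod.LSeriesSummable_of_one_lt_re (ψ ·) hre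
  have ht := hsum.hasSum.tendsto_sum_nat
  have ht2 := tendsto_partial_sums hc0 hC (Set.mem_Icc.mpr ⟨hs.1.le, hs.2⟩)
  rw [DirichletCharacter.LFunction_eq_LSeries ψ hre]
  refine tendsto_nhds_unique ht2 (ht.congr (fun N => ?_))
  exact Finset.sum_congr rfl (fun n _ => term_eq ψ hc0 hs.1.le n)

lemma abs_stdAddChar (j : ZMod f) : ‖ZMod.stdAddChar j‖ = 1 := by
  rw [ZMod.stdAddChar_apply]; exact Circle.norm_coe _

lemma stdAddChar_ne_one {j : ZMod f} (hj : j ≠ 0) : ZMod.stdAddChar j ≠ 1 := by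
  intro h
  apply hj
  apply ZMod.injective_stdAddChar (N := f)
  rw [h, AddChar.map_zero_eq_one]

lemma re_pos {j : ZMod f} (hj : j ≠ 0) : 0 < (1 - ZMod.stdAddChar j).re := by
  set z := ZMod.stdAddChar j with hz
  have habs : ‖z‖ = 1 := abs_stdAddChar j
  have hne : z ≠ 1 := stdAddChar_ne_one hj
  rw [Complex.sub_re, Complex.one_re]
  rcases lt_or_ge z.re 1 with h | h
  · linarith
  · exfalso
    apply hne
    have h1 : z.re ≤ 1 := by
      calc z.re ≤ ‖z‖ := Complex.re_le_norm z
      _ = 1 := habs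
    have h2 : z.re = 1 := le_antisymm h1 h
    have h3 : z.re ^ 2 + z.im ^ 2 = 1 := by
      have := Complex.sq_norm z
      rw [habs, Complex.normSq_apply] at this
      nlinarith [this]
    have h4 : z.im = 0 := by nlinarith
    exact Complex.ext (by simp [h2]) (by simp [h4])

lemma slit {j : ZMod f} (hj : j ≠ 0) : (1 - ZMod.stdAddChar j) ∈ Complex.slitPlane :=
  Complex.mem_slitPlane_iff.mpr (Or.inl (re_pos hj))

lemma conj_stdAddChar (j : ZMod f) :
    (starRingEnd ℂ) (ZMod.stdAddChar j) = ZMod.stdAddChar (-j) := by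
  have h1 : ZMod.stdAddChar j * ZMod.stdAddChar (-j) = 1 := by
    rw [← AddChar.map_add_eq_mul, add_neg_cancel, AddChar.map_zero_eq_one]
  have h2 : (ZMod.stdAddChar j)⁻¹ = (starRingEnd ℂ) (ZMod.stdAddChar j) :=
    Complex.inv_eq_conj (abs_stdAddChar j)
  rw [← h2]
  exact (eq_inv_of_mul_eq_one_right h1).symm

lemma gauss_ne_zero {χ : DirichletCharacter ℂ f} (hprim : χ.IsPrimitive) :
    gaussSum χ ZMod.stdAddChar ≠ 0 := by
  intro h0
  have h1 : ZMod.dft (⇑χ) = ZMod.dft (0 : ZMod f → ℂ) := by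
    rw [map_zero]
    funext k
    rw [show ZMod.dft (⇑χ) k = _ from hprim.fourierTransform_eq_inv_mul_gaussSum k, h0,
      mul_zero, Pi.zero_apply]
  have h2 : (⇑χ : ZMod f → ℂ) = 0 := ZMod.dft.injective h1
  have h3 := congrFun h2 1
  simp only [Pi.zero_apply, MulChar.map_one] at h3
  exact one_ne_zero h3

lemma claimX {χ : DirichletCharacter ℂ f} (hprim : χ.IsPrimitive) {x : ℝ} (hx : |x| < 1) :
    ∑ j : ZMod f, χ j * (-Complex.log (1 - (x:ℂ) * ZMod.stdAddChar j))
      = gaussSum χ ZMod.stdAddChar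
        * ∑' n : ℕ, (χ⁻¹ ((n:ℕ) : ZMod f) * (n:ℂ)⁻¹) * (x:ℂ)^n := by
  have hnorm : ∀ j : ZMod f, ‖(x:ℂ) * ZMod.stdAddChar j‖ < 1 := by
    intro j
    rw [norm_mul, Complex.norm_real, Real.norm_eq_abs, abs_stdAddChar,
      mul_one]
    exact hx
  have hlog : ∀ j : ZMod f, HasSum (fun n : ℕ => ((x:ℂ) * ZMod.stdAddChar j)^n / n)
      (-Complex.log (1 - (x:ℂ) * ZMod.stdAddChar j)) :=
    fun j => Complex.hasSum_taylorSeries_neg_log (hnorm j)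
  calc ∑ j : ZMod f, χ j * (-Complex.log (1 - (x:ℂ) * ZMod.stdAddChar j))
      = ∑ j : ZMod f, ∑' n : ℕ, χ j * (((x:ℂ) * ZMod.stdAddChar j)^n / n) := by
        refine Finset.sum_congr rfl fun j _ => ?_
        rw [← (hlog j).tsum_eq, tsum_mul_left]
  _ = ∑' n : ℕ, ∑ j : ZMod f, χ j * (((x:ℂ) * ZMod.stdAddChar j)^n / n) :=
        (Summable.tsum_finsetSum (fun j _ => ((hlog j).summable.mul_left _))).symm
  _ = ∑' n : ℕ, gaussSum χ ZMod.stdAddChar * ((χ⁻¹ ((n:ℕ) : ZMod f) * (n:ℂ)⁻¹) * (x:ℂ)^n) := by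
        refine tsum_congr fun n => ?_
        have h1 : ∀ j : ZMod f, χ j * (((x:ℂ) * ZMod.stdAddChar j)^n / n)
            = (χ j * ZMod.stdAddChar ((n : ZMod f) * j)) * ((x:ℂ)^n / n) := by
          intro j
          rw [mul_pow, ← AddChar.map_nsmul_eq_pow, nsmul_eq_mul]
          ring
        simp_rw [h1]
        rw [← Finset.sum_mul]
        have h2 : ∑ j : ZMod f, χ j * ZMod.stdAddChar ((n : ZMod f) * j)
            = gaussSum χ (ZMod.stdAddChar.mulShift (n : ZMod f)) := by
          unfold gaussSum
          exact Finset.sum_congr rfl fun j _ => by rw [AddChar.mulShift_apply]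
        rw [h2, gaussSum_mulShift_of_isPrimitive _ hprim]
        rw [div_eq_mul_inv]
        ring
  _ = _ := tsum_mul_left

lemma key (hf : 1 < f) (χ : DirichletCharacter ℂ f) (hprim : χ.IsPrimitive) (hnt : χ ≠ 1) :
    ∑ j : ZMod f, χ j * Complex.log (1 - ZMod.stdAddChar j)
      = -(gaussSum χ ZMod.stdAddChar * DirichletCharacter.LFunction χ⁻¹ 1) := by
  haveI : Fact (1 < f) := ⟨hf⟩
  set ψ := χ⁻¹ with hψdef
  have hψ1 : ψ ≠ 1 := fun h => hnt (by rwa [hψdef, inv_eq_one] at h)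
  set c : ℕ → ℂ := fun n => ψ ((n : ℕ) : ZMod f) with hcdef
  have hc0 : c 0 = 0 := by
    show ψ ((0:ℕ) : ZMod f) = 0
    rw [Nat.cast_zero]
    exact ψ.map_nonunit (by simpa using not_isUnit_zero)
  have hC : ∀ N, ‖∑ n ∈ range N, c n‖ ≤ ∑ n ∈ range f, ‖c n‖ :=
    char_partial_sum_bound ψ hψ1
  set H : ℝ → ℂ := fun s => ∑' n, Fterm c s n with hHdef
  have hH1 : H 1 = DirichletCharacter.LFunction ψ 1 := by
    have t1 : Tendsto H (𝓝[>](1:ℝ)) (𝓝 (H 1)) := tendsto_H hc0 hC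
    have hcont : ContinuousAt (DirichletCharacter.LFunction ψ) 1 :=
      (DirichletCharacter.differentiableAt_LFunction ψ 1 (Or.inr hψ1)).continuousAt
    have t2 : Tendsto (fun s : ℝ => DirichletCharacter.LFunction ψ (s : ℂ)) (𝓝[>](1:ℝ))
        (𝓝 (DirichletCharacter.LFunction ψ 1)) := by
      have hcoe : Tendsto (fun s : ℝ => (s : ℂ)) (𝓝[>](1:ℝ)) (𝓝 (1 : ℂ)) := by
        have h := Complex.continuous_ofReal.continuousAt (x := (1:ℝ))
        simpa using h.mono_left nhdsWithin_le_nhds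
      exact hcont.tendsto.comp hcoe
    have heq : ∀ᶠ s : ℝ in 𝓝[>](1:ℝ),
        DirichletCharacter.LFunction ψ (s : ℂ) = H s := by
      filter_upwards [Ioc_mem_nhdsGT_of_mem (Set.mem_Ico.mpr ⟨le_refl (1:ℝ), one_lt_two⟩)]
        with s hs
      exact (Heq_LFunction ψ hc0 hC hs).symm
    exact tendsto_nhds_unique t1 (t2.congr' heq)
  have habel : Tendsto (fun x : ℝ => ∑' n : ℕ, (c n * (n:ℂ)⁻¹) * (x:ℂ)^n) (𝓝[<](1:ℝ))
      (𝓝 (H 1)) := by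
    have h1 : Tendsto (fun N => ∑ n ∈ range N, (c n * (n:ℂ)⁻¹)) atTop (𝓝 (H 1)) := by
      have h := tendsto_partial_sums hc0 hC (s := 1) ⟨le_refl 1, one_le_two⟩
      refine h.congr fun N => Finset.sum_congr rfl fun n _ => ?_
      rw [u, Real.rpow_neg_one]
      push_cast
      ring
    have h2 := Complex.tendsto_tsum_powerSeries_nhdsWithin_lt h1
    rw [Filter.tendsto_map'_iff] at h2
    exact h2
  set τ := gaussSum χ ZMod.stdAddChar with hτdef
  have hG : Tendsto
      (fun x : ℝ => ∑ j : ZMod f, χ j * (-Complex.log (1 - (x:ℂ) * ZMod.stdAddChar j)))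
      (𝓝[<](1:ℝ)) (𝓝 (τ * H 1)) := by
    apply (habel.const_mul τ).congr'
    filter_upwards [Ioo_mem_nhdsLT_of_mem
      (show (1:ℝ) ∈ Set.Ioc (-1:ℝ) 1 from ⟨by norm_num, le_refl 1⟩)] with x hx
    exact (claimX hprim (abs_lt.mpr ⟨hx.1, hx.2⟩)).symm
  have hGcont : Tendsto
      (fun x : ℝ => ∑ j : ZMod f, χ j * (-Complex.log (1 - (x:ℂ) * ZMod.stdAddChar j)))
      (𝓝[<](1:ℝ)) (𝓝 (∑ j : ZMod f, χ j * (-Complex.log (1 - ZMod.stdAddChar j)))) := by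
    apply Tendsto.mono_left ?_ nhdsWithin_le_nhds
    apply tendsto_finset_sum
    intro j _
    by_cases hj : j = 0
    · have hχ0 : χ j = 0 := by
        rw [hj]
        exact χ.map_nonunit (by simpa using not_isUnit_zero)
      simp only [hχ0, zero_mul]
      exact tendsto_const_nhds
    · refine Tendsto.const_mul _ (Tendsto.neg ?_)
      have hcl : ContinuousAt Complex.log (1 - ZMod.stdAddChar j) :=
        continuousAt_clog (slit hj)
      have hin : Tendsto (fun x : ℝ => 1 - (x:ℂ) * ZMod.stdAddChar j) (𝓝 1)
          (𝓝 (1 - ZMod.stdAddChar j)) := by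
        have hcont2 : Continuous fun x : ℝ => 1 - (x:ℂ) * ZMod.stdAddChar j := by continuity
        have h5 := hcont2.continuousAt (x := (1:ℝ))
        have h6 : (1 - ((1:ℝ):ℂ) * ZMod.stdAddChar j) = 1 - ZMod.stdAddChar j := by
          push_cast; ring
        rw [ContinuousAt, h6] at h5
        exact h5
      exact hcl.tendsto.comp hin
  have hfinal : ∑ j : ZMod f, χ j * (-Complex.log (1 - ZMod.stdAddChar j)) = τ * H 1 :=
    tendsto_nhds_unique hGcont hG
  rw [hH1] at hfinal
  calc ∑ j : ZMod f, χ j * Complex.log (1 - ZMod.stdAddChar j)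
      = -∑ j : ZMod f, χ j * (-Complex.log (1 - ZMod.stdAddChar j)) := by
        rw [← Finset.sum_neg_distrib]
        exact Finset.sum_congr rfl fun j _ => by ring
  _ = -(τ * DirichletCharacter.LFunction ψ 1) := by rw [hfinal]

end S16

open Complex

/-- For `f > 1` and `χ` a nontrivial even primitive Dirichlet character modulo `f`,
`Σ_{k ∈ (ℤ/fℤ)ˣ} χ(k) log|1 − e^{2πik/f}| ≠ 0`. -/
theorem statement_16 (f : ℕ) (hf : 1 < f) (χ : DirichletCharacter ℂ f)
    (hprim : χ.IsPrimitive) (hnt : χ ≠ 1) (heven : χ (-1) = 1) :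
    haveI : NeZero f := ⟨by omega⟩
    (∑ k : (ZMod f)ˣ, χ (k : ZMod f) *
        (Real.log ‖1 - Complex.exp (2 * Real.pi * Complex.I * ((k : ZMod f).val : ℂ) / f)‖ : ℂ))
      ≠ 0 := by
  haveI : NeZero f := ⟨by omega⟩
  haveI : Fact (1 < f) := ⟨hf⟩
  have hψ1 : χ⁻¹ ≠ 1 := fun h => hnt (by rwa [inv_eq_one] at h)
  have hexp : ∀ j : ZMod f,
      Complex.exp (2 * Real.pi * Complex.I * ((j.val : ℕ) : ℂ) / f) = ZMod.stdAddChar j := by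
    intro j
    rw [ZMod.stdAddChar_apply, ZMod.toCircle_apply]
  have hstep1 : (∑ k : (ZMod f)ˣ, χ (k : ZMod f) *
      (Real.log ‖1 - Complex.exp (2 * Real.pi * Complex.I * ((k : ZMod f).val : ℂ) / f)‖ : ℂ))
      = ∑ j : ZMod f, χ j * (Real.log ‖1 - ZMod.stdAddChar j‖ : ℂ) := by
    rw [← S16.sum_units_eq χ (fun j => (Real.log ‖1 - ZMod.stdAddChar j‖ : ℂ))]
    exact Finset.sum_congr rfl fun k _ => by rw [hexp]
  rw [hstep1]
  have hstep2 : ∑ j : ZMod f, χ j * (Real.log ‖1 - ZMod.stdAddChar j‖ : ℂ)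
      = (∑ j : ZMod f, χ j * Complex.log (1 - ZMod.stdAddChar j)
        + ∑ j : ZMod f, χ j * Complex.log (1 - ZMod.stdAddChar (-j))) / 2 := by
    rw [← Finset.sum_add_distrib, Finset.sum_div]
    refine Finset.sum_congr rfl fun j _ => ?_
    by_cases hj : j = 0
    · have hχ0 : χ j = 0 := by
        rw [hj]; exact χ.map_nonunit (by simpa using not_isUnit_zero)
      simp [hχ0]
    · have hre : (Real.log ‖1 - ZMod.stdAddChar j‖ : ℂ)
          = ((Complex.log (1 - ZMod.stdAddChar j)).re : ℂ) := by
        rw [Complex.log_re]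
      have harg : (1 - ZMod.stdAddChar j).arg ≠ Real.pi := by
        intro h
        have := (Complex.arg_eq_pi_iff.mp h).1
        linarith [S16.re_pos hj]
      have hconj : (starRingEnd ℂ) (1 - ZMod.stdAddChar j) = 1 - ZMod.stdAddChar (-j) := by
        rw [map_sub, map_one, S16.conj_stdAddChar]
      have hcc : Complex.log (1 - ZMod.stdAddChar (-j))
          = (starRingEnd ℂ) (Complex.log (1 - ZMod.stdAddChar j)) := by
        rw [← hconj]
        exact Complex.log_conj _ harg
      set w := Complex.log (1 - ZMod.stdAddChar j)
      have h7 : (w.re : ℂ) = (w + (starRingEnd ℂ) w) / 2 := by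
        rw [Complex.add_conj]
        push_cast
        ring
      rw [hre, hcc, h7]
      ring
  rw [hstep2]
  have hstep3 : ∑ j : ZMod f, χ j * Complex.log (1 - ZMod.stdAddChar (-j))
      = ∑ j : ZMod f, χ j * Complex.log (1 - ZMod.stdAddChar j) := by
    rw [Fintype.sum_equiv (Equiv.neg (ZMod f))
      (fun j => χ j * Complex.log (1 - ZMod.stdAddChar (-j)))
      (fun j => χ (-j) * Complex.log (1 - ZMod.stdAddChar j)) (fun j => by simp)]
    refine Finset.sum_congr rfl fun j _ => ?_
    have : χ (-j) = χ j := by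
      rw [show (-j) = (-1) * j by ring, map_mul, heven, one_mul]
    rw [this]
  rw [hstep3, S16.key hf χ hprim hnt]
  have hτ := S16.gauss_ne_zero hprim
  have hL : DirichletCharacter.LFunction χ⁻¹ 1 ≠ 0 :=
    DirichletCharacter.LFunction_ne_zero_of_re_eq_one χ⁻¹ (by simp) (Or.inl hψ1)
  have hne : gaussSum χ ZMod.stdAddChar * DirichletCharacter.LFunction χ⁻¹ 1 ≠ 0 :=
    mul_ne_zero hτ hL
  intro h
  apply hne
  have h2 : -(gaussSum χ ZMod.stdAddChar * DirichletCharacter.LFunction χ⁻¹ 1) = 0 := by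
    rw [← h]; ring
  exact neg_eq_zero.mp h2
end

section
/- Let N ≥ 1 and let x : ℤ/Nℤ → ℚ satisfy: (a) x(0) = 0; (b) x(−a) = x(a) for all a ∈ ℤ/Nℤ; (c) for every factorization N = d·N' with d ≥ 1 and every integer a' with 1 ≤ a' ≤ N'−1, x(d·a' mod N) = Σ_{k=0}^{d−1} x(a' + k·N' mod N). For each divisor d of N, with N' = N/d, set ρ(d) = Σ_{k=0}^{d−1} x(k·N' mod N). Then for all positive integers d₁, d₂ such that d₁·d₂ divides N, one has ρ(d₁·d₂) = ρ(d₁) + ρ(d₂). -/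
/-!
Write `N = d₁ d₂ M`. Splitting `k < d₁ d₂` as `k = j + i d₂` with `j < d₂`, `i < d₁`, the sum
`ρ(d₁ d₂) = ∑ₖ x(k M)` becomes `∑ⱼ ∑ᵢ x(j M + i (d₂ M))`. The inner sum for `j = 0` is `ρ(d₁)`;
for `0 < j < d₂` it is `x(d₁ j M)` by the distribution relation with `d = d₁`, `N' = d₂ M`, and
these terms, together with `x(0) = 0`, add up to `ρ(d₂)`.
-/

open Finset

theorem Finset.sum_range_mul_eq_sum_sum {M : Type*} [AddCommMonoid M] (m n : ℕ) (f : ℕ → M) :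
    ∑ i ∈ range (m * n), f i = ∑ j ∈ range n, ∑ k ∈ range m, f (j + k * n) := by
  induction m with
  | zero => simp
  | succ m ih =>
    rw [Nat.succ_mul, sum_range_add, ih, ← sum_add_distrib]
    refine sum_congr rfl fun j _ => ?_
    rw [sum_range_succ, add_comm j]

theorem statement_18_general (N : ℕ) (hN : 1 ≤ N) (x : ZMod N → ℚ)
    (ha : x 0 = 0)
    (hc : ∀ d N' : ℕ, 1 ≤ d → N = d * N' → ∀ a' : ℕ, 1 ≤ a' → a' ≤ N' - 1 →
      x ((d * a' : ℕ) : ZMod N) =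
        ∑ k ∈ Finset.range d, x ((a' + k * N' : ℕ) : ZMod N)) :
    ∀ d₁ d₂ : ℕ, 0 < d₁ → 0 < d₂ → d₁ * d₂ ∣ N →
      (∑ k ∈ Finset.range (d₁ * d₂), x ((k * (N / (d₁ * d₂)) : ℕ) : ZMod N)) =
        (∑ k ∈ Finset.range d₁, x ((k * (N / d₁) : ℕ) : ZMod N)) +
        (∑ k ∈ Finset.range d₂, x ((k * (N / d₂) : ℕ) : ZMod N)) := by
  rintro d₁ d₂ hd₁ hd₂ ⟨M, hNM⟩
  have hM : 0 < M := Nat.pos_of_mul_pos_left (hNM ▸ hN)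
  have hN₁₂ : N / (d₁ * d₂) = M := by rw [hNM, Nat.mul_div_cancel_left _ (Nat.mul_pos hd₁ hd₂)]
  have hN₁ : N / d₁ = d₂ * M := by rw [hNM, mul_assoc, Nat.mul_div_cancel_left _ hd₁]
  have hN₂ : N / d₂ = d₁ * M := by rw [hNM, mul_comm d₁, mul_assoc, Nat.mul_div_cancel_left _ hd₂]
  have fiber_sum : ∀ j ∈ range d₂, ∑ i ∈ range d₁, x (((j + i * d₂) * M : ℕ) : ZMod N) =
      x ((j * (d₁ * M) : ℕ) : ZMod N) +
        if j = 0 then ∑ i ∈ range d₁, x ((i * (d₂ * M) : ℕ) : ZMod N) else 0 := by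
    intro j hj
    obtain rfl | hj₀ := Nat.eq_zero_or_pos j
    · simp [ha, mul_assoc]
    have hjM : j * M ≤ d₂ * M - 1 := by
      have := Nat.mul_lt_mul_of_pos_right (mem_range.mp hj) hM
      omega
    rw [if_neg hj₀.ne', add_zero, mul_left_comm,
      hc d₁ (d₂ * M) hd₁ (hNM.trans (mul_assoc _ _ _)) (j * M) (Nat.mul_pos hj₀ hM) hjM]
    exact sum_congr rfl fun i _ => by rw [add_mul, mul_assoc]
  rw [hN₁₂, hN₁, hN₂, sum_range_mul_eq_sum_sum, sum_congr rfl fiber_sum, sum_add_distrib,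
    sum_ite_eq' _ _, if_pos (mem_range.mpr hd₂), add_comm]

/-- Distribution relations in degree 1: if `x : ℤ/Nℤ → ℚ` satisfies `x(0) = 0`,
`x(−a) = x(a)`, and the distribution relations, then
`ρ(d) = Σ_{k=0}^{d−1} x(k·(N/d))` is additive: `ρ(d₁d₂) = ρ(d₁) + ρ(d₂)` whenever
`d₁·d₂ ∣ N`. -/
theorem statement_18 (N : ℕ) (hN : 1 ≤ N) (x : ZMod N → ℚ)
    (ha : x 0 = 0) (hb : ∀ a : ZMod N, x (-a) = x a)
    (hc : ∀ d N' : ℕ, 1 ≤ d → N = d * N' → ∀ a' : ℕ, 1 ≤ a' → a' ≤ N' - 1 →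
      x ((d * a' : ℕ) : ZMod N) =
        ∑ k ∈ Finset.range d, x ((a' + k * N' : ℕ) : ZMod N)) :
    ∀ d₁ d₂ : ℕ, 0 < d₁ → 0 < d₂ → d₁ * d₂ ∣ N →
      (∑ k ∈ Finset.range (d₁ * d₂), x ((k * (N / (d₁ * d₂)) : ℕ) : ZMod N)) =
        (∑ k ∈ Finset.range d₁, x ((k * (N / d₁) : ℕ) : ZMod N)) +
        (∑ k ∈ Finset.range d₂, x ((k * (N / d₂) : ℕ) : ZMod N)) :=
  statement_18_general N hN x ha hc
end

section
/- Let N ≥ 2 and let V be the ℚ-vector space of functions x : ℤ/Nℤ → ℚ satisfying: (a) x(0) = 0; (b) x(−a) = x(a) for all a; (c) for every factorization N = d·N' with d ≥ 1 and every integer a' with 1 ≤ a' ≤ N'−1, x(d·a' mod N) = Σ_{k=0}^{d−1} x(a' + k·N' mod N). Let Hom(Div(N),ℚ) be the ℚ-vector space of functions ρ from the positive divisors of N to ℚ such that ρ(d₁d₂) = ρ(d₁) + ρ(d₂) whenever d₁, d₂ and d₁d₂ all divide N, and let Φ : V → Hom(Div(N),ℚ) be the linear map defined by Φ(x)(d)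 = Σ_{k=0}^{d−1} x(k·(N/d) mod N). Then Φ is surjective, and the restriction of Φ to the invariant subspace V^{inv} = { x ∈ V : x(k·a) = x(a) for all k ∈ (ℤ/Nℤ)^× and a ∈ ℤ/Nℤ } is a bijection from V^{inv} onto Hom(Div(N),ℚ). -/
/-- The conditions (a),(b),(c) defining the degree-1 part of `grtmd(N,ℚ)`. -/
def DistCond (N : ℕ) (x : ZMod N → ℚ) : Prop :=
  x 0 = 0 ∧ (∀ a : ZMod N, x (-a) = x a) ∧
    ∀ d N' : ℕ, 1 ≤ d → N = d * N' → ∀ a' : ℕ, 1 ≤ a' → a' ≤ N' - 1 →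
      x ((d * a' : ℕ) : ZMod N) =
        ∑ k ∈ Finset.range d, x ((a' + k * N' : ℕ) : ZMod N)

/-- Invariance under `(ℤ/Nℤ)ˣ`. -/
def InvCond (N : ℕ) (x : ZMod N → ℚ) : Prop :=
  ∀ k : (ZMod N)ˣ, ∀ a : ZMod N, x ((k : ZMod N) * a) = x a

/-- The map `Φ`, `Φ(x)(d) = Σ_{k=0}^{d−1} x(k·(N/d))`. -/
def PhiMap (N : ℕ) (x : ZMod N → ℚ) (d : ℕ) : ℚ :=
  ∑ k ∈ Finset.range d, x ((k * (N / d) : ℕ) : ZMod N)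

/-- Additivity on the divisors of `N`:
`ρ(d₁d₂) = ρ(d₁) + ρ(d₂)` whenever `d₁, d₂, d₁d₂` all divide `N`. -/
def AddOnDiv (N : ℕ) (ρ : ℕ → ℚ) : Prop :=
  ∀ d₁ d₂ : ℕ, d₁ ∣ N → d₂ ∣ N → d₁ * d₂ ∣ N → ρ (d₁ * d₂) = ρ d₁ + ρ d₂

private lemma sum_range_mul' (a b : ℕ) (g : ℕ → ℚ) :
    ∑ r ∈ Finset.range (a * b), g r
      = ∑ k ∈ Finset.range a, ∑ j ∈ Finset.range b, g (k + j * a) := by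
  induction b with
  | zero => simp
  | succ b ih =>
    rw [Nat.mul_succ, Finset.sum_range_add, ih]
    rw [Finset.sum_congr rfl (fun i _ => show g (a * b + i) = g (i + b * a) by
      rw [Nat.add_comm, Nat.mul_comm])]
    rw [← Finset.sum_add_distrib]
    exact Finset.sum_congr rfl (fun k _ => by rw [Finset.sum_range_succ])

private lemma card_gcd_filter {d e : ℕ} (hd : 0 < d) (he : e ∣ d) :
    ((Finset.range d).filter (fun k => d / Nat.gcd d k = e)).card = Nat.totient e := by
  have hepos : 0 < e := by
    rcases Nat.eq_zero_or_pos e with h | h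
    · subst h; simp at he; omega
    · exact h
  obtain ⟨q, heq⟩ := he
  have hq : 0 < q := by
    rcases Nat.eq_zero_or_pos q with h | h
    · subst h; omega
    · exact h
  subst heq
  rw [Nat.totient_eq_card_coprime]
  symm
  apply Finset.card_bij' (fun j _ => j * q) (fun k _ => k / q)
  · intro j hj
    rw [Finset.mem_filter] at hj ⊢
    obtain ⟨hj1, hj2⟩ := hj
    rw [Finset.mem_range] at hj1
    refine ⟨Finset.mem_range.mpr ((Nat.mul_lt_mul_right hq).mpr hj1), ?_⟩
    have h1 : Nat.gcd (e * q) (j * q) = q := by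
      rw [Nat.gcd_mul_right, hj2, Nat.one_mul]
    rw [h1, Nat.mul_div_cancel _ hq]
  · intro k hk
    rw [Finset.mem_filter] at hk
    obtain ⟨hk1, hk2⟩ := hk
    rw [Finset.mem_range] at hk1
    have h1 : e * Nat.gcd (e * q) k = e * q := by
      have h0 := Nat.div_mul_cancel (Nat.gcd_dvd_left (e * q) k)
      rw [hk2] at h0; exact h0
    have hgd : Nat.gcd (e * q) k = q := Nat.eq_of_mul_eq_mul_left hepos h1
    have hdk : q ∣ k := hgd ▸ Nat.gcd_dvd_right _ _
    rw [Finset.mem_filter, Finset.mem_range]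
    refine ⟨(Nat.div_lt_iff_lt_mul hq).mpr (by omega), ?_⟩
    show Nat.Coprime e (k / q)
    have h2 : Nat.gcd (e * q) (k / q * q) = Nat.gcd e (k / q) * q := Nat.gcd_mul_right _ _ _
    rw [Nat.div_mul_cancel hdk, hgd] at h2
    have h3 : Nat.gcd e (k / q) * q = 1 * q := by rw [Nat.one_mul, ← h2]
    exact Nat.eq_of_mul_eq_mul_right hq h3
  · intro j _
    exact Nat.mul_div_cancel _ hq
  · intro k hk
    rw [Finset.mem_filter] at hk
    have h1 : e * Nat.gcd (e * q) k = e * q := by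
      have h0 := Nat.div_mul_cancel (Nat.gcd_dvd_left (e * q) k)
      rw [hk.2] at h0; exact h0
    have hgd : Nat.gcd (e * q) k = q := Nat.eq_of_mul_eq_mul_left hepos h1
    exact Nat.div_mul_cancel (hgd ▸ Nat.gcd_dvd_right _ _)

private lemma sum_gcd_eq (d : ℕ) (hd : 0 < d) (F : ℕ → ℚ) :
    ∑ k ∈ Finset.range d, F (d / Nat.gcd d k)
      = ∑ e ∈ d.divisors, (Nat.totient e : ℚ) * F e := by
  rw [← Finset.sum_fiberwise_of_maps_to
    (g := fun k => d / Nat.gcd d k) (t := d.divisors)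
    (fun k _ => Nat.mem_divisors.mpr ⟨Nat.div_dvd_of_dvd (Nat.gcd_dvd_left d k), hd.ne'⟩)]
  refine Finset.sum_congr rfl fun e he => ?_
  rw [Finset.sum_congr rfl (fun k hk => by
    rw [(Finset.mem_filter.mp hk).2])]
  rw [Finset.sum_const, card_gcd_filter hd (Nat.dvd_of_mem_divisors he), nsmul_eq_mul]

noncomputable def LamF (ρ : ℕ → ℚ) (m : ℕ) : ℚ := if IsPrimePow m then ρ m.minFac else 0

noncomputable def fF (ρ : ℕ → ℚ) (m : ℕ) : ℚ := LamF ρ m / (Nat.totient m : ℚ)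

noncomputable def xF (N : ℕ) (ρ : ℕ → ℚ) : ZMod N → ℚ := fun a => fF ρ (addOrderOf a)

private lemma eq_pow_pred {p m k : ℕ} (hp : p.Prime) (h : p * m = p ^ k) (hk : 0 < k) :
    m = p ^ (k - 1) := by
  have h2 : p * m = p * p ^ (k - 1) := by
    rw [h, ← pow_succ']
    congr 1
    omega
  exact Nat.eq_of_mul_eq_mul_left hp.pos h2

private lemma prime_eq_of_mul_eq_pow {p q m k : ℕ} (hp : p.Prime) (hq : Prime q)
    (h : p * m = q ^ k) : p = q := by
  have hqp : Nat.Prime q := Nat.prime_iff.mpr hq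
  have h1 : p ∣ q ^ k := h ▸ Dvd.intro m rfl
  exact (Nat.prime_dvd_prime_iff_eq hp hqp).mp (hp.dvd_of_dvd_pow h1)

private lemma not_isPrimePow_mul {p m : ℕ} (hp : p.Prime) (hpm : ¬ p ∣ m) (hm2 : 2 ≤ m) :
    ¬ IsPrimePow (p * m) := by
  rintro ⟨q, k, hq, hk, hqk⟩
  have hpq : p = q := prime_eq_of_mul_eq_pow hp hq hqk.symm
  subst hpq
  have hm : m = p ^ (k - 1) := eq_pow_pred hp hqk.symm hk
  rcases Nat.eq_zero_or_pos (k - 1) with h | h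
  · rw [h, pow_zero] at hm; omega
  · exact hpm (hm ▸ dvd_pow_self p h.ne')

private lemma fF_one (ρ : ℕ → ℚ) : fF ρ 1 = 0 := by
  simp [fF, LamF, not_isPrimePow_one]

private lemma fF_eq_mul {ρ : ℕ → ℚ} {p m : ℕ} (hp : p.Prime) (hpm : p ∣ m) (hm2 : 2 ≤ m) :
    fF ρ m = (p : ℚ) * fF ρ (p * m) := by
  have hφ : (Nat.totient (p * m) : ℚ) = (p : ℚ) * (Nat.totient m : ℚ) := by
    rw [Nat.totient_mul_of_prime_of_dvd hp hpm]; push_cast; ring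
  by_cases h : IsPrimePow m
  · obtain ⟨q, k, hq, hk, rfl⟩ := h
    have hpq : p = q := by
      have hqp : Nat.Prime q := Nat.prime_iff.mpr hq
      exact (Nat.prime_dvd_prime_iff_eq hp hqp).mp (hp.dvd_of_dvd_pow hpm)
    subst hpq
    have h1 : p * p ^ k = p ^ (k + 1) := (pow_succ' p k).symm
    have hpp1 : IsPrimePow (p ^ k) := ⟨p, k, hq, hk, rfl⟩
    have hpp2 : IsPrimePow (p ^ (k + 1)) := ⟨p, k + 1, hq, by omega, rfl⟩
    have hmf1 : (p ^ k).minFac = p := hp.pow_minFac (by omega)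
    have hmf2 : (p * p ^ k).minFac = p := by rw [h1]; exact hp.pow_minFac (by omega)
    have e1 : LamF ρ (p ^ k) = ρ p := by rw [LamF, if_pos hpp1, hmf1]
    have e2 : LamF ρ (p * p ^ k) = ρ p := by rw [LamF, hmf2, if_pos (h1 ▸ hpp2)]
    have hφpos : (0 : ℚ) < (Nat.totient (p ^ k) : ℚ) := by
      exact_mod_cast Nat.totient_pos.mpr (by positivity)
    rw [fF, fF, e1, e2, hφ]
    have hppos : (0 : ℚ) < (p : ℚ) := by exact_mod_cast hp.pos
    field_simp
  · have h2 : ¬ IsPrimePow (p * m) := by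
      rintro ⟨q, k, hq, hk, hqk⟩
      have hpq : p = q := prime_eq_of_mul_eq_pow hp hq hqk.symm
      subst hpq
      have hm : m = p ^ (k - 1) := eq_pow_pred hp hqk.symm hk
      rcases Nat.eq_zero_or_pos (k - 1) with h3 | h3
      · rw [h3, pow_zero] at hm; omega
      · exact h ⟨p, k - 1, hp.prime, h3, hm.symm⟩
    rw [fF, fF, LamF, if_neg h, LamF, if_neg h2]
    simp

private lemma addOrderOf_unit_mul {N : ℕ} (u : (ZMod N)ˣ) (a : ZMod N) :
    addOrderOf ((u : ZMod N) * a) = addOrderOf a := by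
  rw [addOrderOf_eq_addOrderOf_iff]
  intro n
  have h : n • ((u : ZMod N) * a) = (u : ZMod N) * (n • a) := by
    rw [mul_smul_comm]
  rw [h]
  exact Units.mul_right_eq_zero u

private lemma addOrderOf_dvd_N {N : ℕ} (a : ZMod N) : addOrderOf a ∣ N := by
  apply addOrderOf_dvd_of_nsmul_eq_zero
  rw [nsmul_eq_mul, ZMod.natCast_self, zero_mul]

private def RelD (N : ℕ) (x : ZMod N → ℚ) (d : ℕ) : Prop :=
  ∀ N' : ℕ, N = d * N' → ∀ a' : ℕ, 1 ≤ a' → a' ≤ N' - 1 →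
    x ((d * a' : ℕ) : ZMod N) = ∑ k ∈ Finset.range d, x ((a' + k * N' : ℕ) : ZMod N)

private lemma RelD.mul {N : ℕ} {x : ZMod N → ℚ} {d₁ d₂ : ℕ} (hN : 0 < N)
    (h₁ : RelD N x d₁) (h₂ : RelD N x d₂) : RelD N x (d₁ * d₂) := by
  intro N'' hN'' a'' ha1 ha2
  have hd₁ : 0 < d₁ := by
    rcases Nat.eq_zero_or_pos d₁ with h | h
    · subst h; simp at hN''; omega
    · exact h
  have hd₂ : 0 < d₂ := by
    rcases Nat.eq_zero_or_pos d₂ with h | h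
    · subst h; rw [Nat.mul_zero, Nat.zero_mul] at hN''; omega
    · exact h
  have hN''pos : 0 < N'' := by
    rcases Nat.eq_zero_or_pos N'' with h | h
    · subst h; rw [Nat.mul_zero] at hN''; omega
    · exact h
  have haN : a'' + 1 ≤ N'' := by omega
  have e1 := h₁ (d₂ * N'') (by rw [hN'']; ring) (d₂ * a'')
    (Nat.mul_pos hd₂ ha1)
    (by
      have h5 : d₂ * (a'' + 1) ≤ d₂ * N'' := Nat.mul_le_mul le_rfl haN
      rw [Nat.mul_add, Nat.mul_one] at h5
      omega)
  have e2 : ∀ k ∈ Finset.range d₁,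
      x ((d₂ * (a'' + k * N'') : ℕ) : ZMod N)
        = ∑ j ∈ Finset.range d₂, x ((a'' + k * N'' + j * (d₁ * N'') : ℕ) : ZMod N) := by
    intro k hk
    rw [Finset.mem_range] at hk
    refine h₂ (d₁ * N'') (by rw [hN'']; ring) (a'' + k * N'') (by omega) ?_
    have h5 : (k + 1) * N'' ≤ d₁ * N'' := Nat.mul_le_mul (by omega) le_rfl
    rw [Nat.add_mul, Nat.one_mul] at h5
    omega
  rw [show d₁ * d₂ * a'' = d₁ * (d₂ * a'') by ring, e1,
    sum_range_mul' d₁ d₂ (fun r => x ((a'' + r * N'' : ℕ) : ZMod N))]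
  refine Finset.sum_congr rfl fun k hk => ?_
  rw [show d₂ * a'' + k * (d₂ * N'') = d₂ * (a'' + k * N'') by ring, e2 k hk]
  refine Finset.sum_congr rfl fun j _ => ?_
  rw [show a'' + k * N'' + j * (d₁ * N'') = a'' + (k + j * d₁) * N'' by ring]

private lemma RelD.one {N : ℕ} {x : ZMod N → ℚ} : RelD N x 1 := by
  intro N' hN' a' ha1 ha2
  simp

private lemma RelD.all {N : ℕ} {x : ZMod N → ℚ} (hN : 2 ≤ N)
    (hprime : ∀ p : ℕ, p.Prime → RelD N x p) : ∀ d, RelD N x d := by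
  intro d
  induction d using Nat.strong_induction_on with
  | _ d ih =>
    rcases Nat.lt_or_ge d 2 with hd | hd
    · interval_cases d
      · intro N' hN' a' _ _
        rw [Nat.zero_mul] at hN'; omega
      · exact RelD.one
    · have hd1 : d ≠ 1 := by omega
      have hp := Nat.minFac_prime hd1
      have hdvd := Nat.minFac_dvd d
      have heq : d = d.minFac * (d / d.minFac) := (Nat.mul_div_cancel' hdvd).symm
      have hlt : d / d.minFac < d := Nat.div_lt_self (by omega) hp.one_lt
      rw [heq]
      exact RelD.mul (by omega) (hprime _ hp) (ih _ hlt)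

private lemma fF_not_pp {ρ : ℕ → ℚ} {m : ℕ} (h : ¬ IsPrimePow m) : fF ρ m = 0 := by
  rw [fF, LamF, if_neg h, zero_div]

private lemma relD_prime {N : ℕ} (hN : 2 ≤ N) (ρ : ℕ → ℚ) {p : ℕ} (hp : p.Prime) :
    RelD N (xF N ρ) p := by
  intro N' hfact a' ha1 ha2
  have hN0 : N ≠ 0 := by omega
  have hp2 := hp.two_le
  have hN'pos : 0 < N' := by
    rcases Nat.eq_zero_or_pos N' with h | h
    · subst h; rw [Nat.mul_zero] at hfact; omega
    · exact h
  set g := Nat.gcd a' N' with hgdef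
  have hgpos : 0 < g := Nat.gcd_pos_of_pos_left _ ha1
  have hga : g ∣ a' := Nat.gcd_dvd_left _ _
  have hgN : g ∣ N' := Nat.gcd_dvd_right _ _
  set c₀ := a' / g with hc₀def
  set m := N' / g with hmdef
  have hac : a' = g * c₀ := (Nat.mul_div_cancel' hga).symm
  have hNm : N' = g * m := (Nat.mul_div_cancel' hgN).symm
  have hco : Nat.Coprime c₀ m := Nat.coprime_div_gcd_div_gcd hgpos
  have hga' : g ≤ a' := Nat.le_of_dvd ha1 hga
  have hm2 : 2 ≤ m := by
    by_contra h
    push_neg at h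
    interval_cases m <;> omega
  -- LHS order
  have hLHS : addOrderOf (((p * a' : ℕ)) : ZMod N) = m := by
    rw [ZMod.addOrderOf_coe _ hN0]
    have h1 : Nat.gcd N (p * a') = p * g := by
      rw [hfact, Nat.gcd_mul_left]
      congr 1
      rw [Nat.gcd_comm]
    rw [h1, hfact, hNm, show p * (g * m) = (p * g) * m by ring,
      Nat.mul_div_cancel_left _ (Nat.mul_pos hp.pos hgpos)]
  have hcmk : ∀ k : ℕ, Nat.Coprime (c₀ + k * m) m :=
    fun k => (Nat.coprime_add_mul_right_left c₀ m k).mpr hco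
  -- orders on the RHS
  have hordk : ∀ k : ℕ, addOrderOf (((a' + k * N' : ℕ)) : ZMod N)
      = if p ∣ (c₀ + k * m) then m else p * m := by
    intro k
    have hb : a' + k * N' = g * (c₀ + k * m) := by rw [hac, hNm]; ring
    have hNg : N = g * (p * m) := by rw [hfact, hNm]; ring
    rw [ZMod.addOrderOf_coe _ hN0, hb, hNg, Nat.gcd_mul_left]
    have htm : Nat.Coprime (Nat.gcd (p * m) (c₀ + k * m)) m :=
      Nat.Coprime.coprime_dvd_left (Nat.gcd_dvd_right _ _) (hcmk k)
    have htp : Nat.gcd (p * m) (c₀ + k * m) ∣ p :=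
      htm.dvd_of_dvd_mul_right (Nat.gcd_dvd_left _ _)
    by_cases hpc : p ∣ c₀ + k * m
    · have htp' : Nat.gcd (p * m) (c₀ + k * m) = p :=
        Nat.dvd_antisymm htp (Nat.dvd_gcd (Dvd.intro m rfl) hpc)
      rw [if_pos hpc, htp', show g * (p * m) = (g * p) * m by ring,
        Nat.mul_div_cancel_left _ (Nat.mul_pos hgpos hp.pos)]
    · have ht1 : Nat.gcd (p * m) (c₀ + k * m) = 1 := by
        rcases hp.eq_one_or_self_of_dvd _ htp with h | h
        · exact h
        · exact absurd (h ▸ Nat.gcd_dvd_right (p * m) (c₀ + k * m)) hpc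
      rw [if_neg hpc, ht1, Nat.mul_one,
        Nat.mul_div_cancel_left _ hgpos]
  show fF ρ (addOrderOf _) = ∑ k ∈ Finset.range p, fF ρ (addOrderOf _)
  rw [hLHS]
  by_cases hpm : p ∣ m
  · have hnone : ∀ k : ℕ, ¬ p ∣ (c₀ + k * m) := by
      intro k hk
      have h1 : p ∣ 1 := (hcmk k) ▸ Nat.dvd_gcd hk hpm
      have := Nat.le_of_dvd one_pos h1
      omega
    rw [Finset.sum_congr rfl (fun k _ => by rw [hordk k, if_neg (hnone k)]),
      Finset.sum_const, Finset.card_range, nsmul_eq_mul]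
    exact fF_eq_mul hp hpm hm2
  · have hppm : ¬ IsPrimePow (p * m) := not_isPrimePow_mul hp hpm hm2
    by_cases hpp : IsPrimePow m
    · haveI : Fact p.Prime := ⟨hp⟩
      have hmne : (m : ZMod p) ≠ 0 := by
        rw [Ne, ZMod.natCast_eq_zero_iff]
        exact hpm
      set z : ZMod p := (-(c₀ : ZMod p)) * (m : ZMod p)⁻¹ with hzdef
      set k₀ : ℕ := z.val with hk₀def
      have hk₀lt : k₀ < p := ZMod.val_lt z
      have hzz : ((k₀ : ℕ) : ZMod p) = z := ZMod.natCast_rightInverse z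
      have hk₀dvd : p ∣ c₀ + k₀ * m := by
        rw [← ZMod.natCast_eq_zero_iff]
        push_cast
        rw [hzz, hzdef]
        calc (c₀ : ZMod p) + -(c₀ : ZMod p) * (m : ZMod p)⁻¹ * (m : ZMod p)
            = (c₀ : ZMod p) + -(c₀ : ZMod p) * ((m : ZMod p)⁻¹ * (m : ZMod p)) := by ring
          _ = 0 := by rw [inv_mul_cancel₀ hmne]; ring
      have huniq : ∀ k, k < p → p ∣ c₀ + k * m → k = k₀ := by
        intro k hk hdvd
        have h1 : ((c₀ + k * m : ℕ) : ZMod p) = 0 :=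
          (ZMod.natCast_eq_zero_iff _ _).mpr hdvd
        have h2 : ((c₀ + k₀ * m : ℕ) : ZMod p) = 0 :=
          (ZMod.natCast_eq_zero_iff _ _).mpr hk₀dvd
        push_cast at h1 h2
        have h3 : (k : ZMod p) = (k₀ : ZMod p) := by
          apply mul_right_cancel₀ hmne
          linear_combination h1 - h2
        have h4 := congrArg ZMod.val h3
        rwa [ZMod.val_cast_of_lt hk, ZMod.val_cast_of_lt hk₀lt] at h4
      rw [Finset.sum_eq_single_of_mem k₀ (Finset.mem_range.mpr hk₀lt)
        (fun k hk hne => by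
          rw [hordk k, if_neg (fun hd => hne (huniq k (Finset.mem_range.mp hk) hd)),
            fF_not_pp hppm]),
        hordk k₀, if_pos hk₀dvd]
    · rw [Finset.sum_eq_zero (fun k _ => by
        rw [hordk k]
        by_cases h : p ∣ c₀ + k * m
        · rw [if_pos h]; exact fF_not_pp hpp
        · rw [if_neg h]; exact fF_not_pp hppm)]
      exact fF_not_pp hpp

private lemma lam_sum {N : ℕ} (hN : 2 ≤ N) {ρ : ℕ → ℚ} (hρ : AddOnDiv N ρ) :
    ∀ d : ℕ, d ∣ N → ∑ e ∈ d.divisors, LamF ρ e = ρ d := by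
  have hρ1 : ρ 1 = 0 := by
    have h := hρ 1 1 (one_dvd N) (one_dvd N) (by rw [Nat.mul_one]; exact one_dvd N)
    rw [Nat.mul_one] at h
    linarith
  intro d
  induction d using Nat.strong_induction_on with
  | _ d ih =>
    intro hdN
    have hd0 : 0 < d := Nat.pos_of_dvd_of_pos hdN (by omega)
    rcases Nat.lt_or_ge d 2 with hd | hd
    · interval_cases d
      rw [Nat.divisors_one, Finset.sum_singleton, LamF, if_neg not_isPrimePow_one, hρ1]
    · have hp := Nat.minFac_prime (show d ≠ 1 by omega)
      have hdvd := Nat.minFac_dvd d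
      set p := d.minFac with hpdef
      set d' := d / p with hd'def
      have heq : d = p * d' := (Nat.mul_div_cancel' hdvd).symm
      have hd'0 : 0 < d' := Nat.div_pos (Nat.le_of_dvd hd0 hdvd) hp.pos
      have hd'lt : d' < d := Nat.div_lt_self hd0 hp.one_lt
      have hd'd : d' ∣ d := Nat.div_dvd_of_dvd hdvd
      have hd'N : d' ∣ N := dvd_trans hd'd hdN
      have hsub : d'.divisors ⊆ d.divisors := Nat.divisors_subset_of_dvd hd0.ne' hd'd
      have hsplit := Finset.sum_sdiff (f := LamF ρ) hsub
      set v := d.factorization p with hvdef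
      have hv1 : 0 < v := hp.factorization_pos_of_dvd hd0.ne' hdvd
      have hpvd : p ^ v ∣ d := Nat.ordProj_dvd d p
      have hpvd' : ¬ p ^ v ∣ d' := by
        intro hcon
        have h2 : p ^ (v + 1) ∣ d := by
          rw [heq, pow_succ']
          exact mul_dvd_mul_left p hcon
        have := (Nat.Prime.pow_dvd_iff_le_factorization hp hd0.ne').mp h2
        omega
      have hmem : p ^ v ∈ d.divisors \ d'.divisors := by
        rw [Finset.mem_sdiff, Nat.mem_divisors, Nat.mem_divisors]
        exact ⟨⟨hpvd, hd0.ne'⟩, fun hcon => hpvd' hcon.1⟩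
      have hsdiff : ∑ e ∈ d.divisors \ d'.divisors, LamF ρ e = ρ p := by
        rw [Finset.sum_eq_single_of_mem (p ^ v) hmem (fun e hee hne => ?_)]
        · rw [LamF, if_pos ⟨p, v, hp.prime, hv1, rfl⟩, hp.pow_minFac hv1.ne']
        · rw [Finset.mem_sdiff, Nat.mem_divisors, Nat.mem_divisors] at hee
          obtain ⟨⟨hed, -⟩, hed'⟩ := hee
          have hnpp : ¬ IsPrimePow e := by
            rintro ⟨q, k, hq, hk, rfl⟩
            have hqp : Nat.Prime q := Nat.prime_iff.mpr hq
            by_cases hqpeq : q = p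
            · have hedp : p ^ k ∣ d := by rw [← hqpeq]; exact hed
              have hkv : k ≤ v := (Nat.Prime.pow_dvd_iff_le_factorization hp hd0.ne').mp hedp
              have hkv' : k = v := by
                by_contra hkk
                have h7 : p ^ (k + 1) ∣ d :=
                  (Nat.Prime.pow_dvd_iff_le_factorization hp hd0.ne').mpr (by omega)
                rw [heq, pow_succ'] at h7
                have h6 : p ^ k ∣ d' := (Nat.mul_dvd_mul_iff_left hp.pos).mp h7
                exact hed' ⟨by rw [hqpeq]; exact h6, hd'0.ne'⟩
              exact hne (by rw [hqpeq, hkv'])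
            · have hco : Nat.Coprime (q ^ k) p :=
                Nat.Coprime.pow_left k ((Nat.coprime_primes hqp hp).mpr hqpeq)
              have h8 : q ^ k ∣ p * d' := heq ▸ hed
              have h9 : q ^ k ∣ d' := hco.dvd_of_dvd_mul_left h8
              exact hed' ⟨h9, hd'0.ne'⟩
          rw [LamF, if_neg hnpp]
      have hρd : ρ d = ρ p + ρ d' := by
        conv_lhs => rw [heq]
        exact hρ p d' (dvd_trans hdvd hdN) hd'N (heq ▸ hdN)
      rw [← hsplit, hsdiff, ih d' hd'lt hd'N, hρd]

private lemma inv_rep {N : ℕ} (hN : 2 ≤ N) {x : ZMod N → ℚ}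
    (hx : ∀ u : (ZMod N)ˣ, ∀ a : ZMod N, x ((u : ZMod N) * a) = x a) (a : ZMod N) :
    x a = x ((N / addOrderOf a : ℕ) : ZMod N) := by
  haveI : NeZero N := ⟨by omega⟩
  have hval : ((a.val : ℕ) : ZMod N) = a := ZMod.natCast_rightInverse a
  have hord : addOrderOf a = N / Nat.gcd N a.val := by
    conv_lhs => rw [← hval]
    exact ZMod.addOrderOf_coe a.val (by omega)
  set m := addOrderOf a with hmdef
  have hmN : m ∣ N := addOrderOf_dvd_N a
  have hm0 : 0 < m := by
    rcases Nat.eq_zero_or_pos m with h | h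
    · rw [h] at hmN
      have := Nat.eq_zero_of_zero_dvd hmN
      omega
    · exact h
  haveI : NeZero m := ⟨hm0.ne'⟩
  set g := N / m with hgdef
  have hgpos : 0 < g := Nat.div_pos (Nat.le_of_dvd (by omega) hmN) hm0
  have hmg : m * g = N := Nat.mul_div_cancel' hmN
  have hgcd : Nat.gcd N a.val = g := by
    have h1 := Nat.div_div_self (Nat.gcd_dvd_left N a.val) (show N ≠ 0 by omega)
    rw [← hord] at h1
    rw [hgdef, ← h1]
  have hgval : g ∣ a.val := hgcd ▸ Nat.gcd_dvd_right N a.val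
  set c := a.val / g with hcdef
  have hcg : a.val = g * c := (Nat.mul_div_cancel' hgval).symm
  have hNg : N / g = m := by
    rw [hgdef]
    exact Nat.div_div_self hmN (show N ≠ 0 by omega)
  have hco : Nat.Coprime c m := by
    have h2 := Nat.coprime_div_gcd_div_gcd (m := N) (n := a.val)
      (hgcd ▸ hgpos)
    rw [hgcd, hNg] at h2
    exact (Nat.coprime_comm.mp h2)
  obtain ⟨u, hu⟩ := ZMod.unitsMap_surjective hmN (ZMod.unitOfCoprime c hco)
  have hcast : (((u : ZMod N).val : ℕ) : ZMod m) = (c : ZMod m) := by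
    have h3 := congrArg (Units.val) hu
    rw [ZMod.unitsMap_def, Units.coe_map, MonoidHom.coe_coe, ZMod.castHom_apply,
      ZMod.coe_unitOfCoprime] at h3
    rw [ZMod.natCast_val]
    exact h3
  have hmod : (u : ZMod N).val ≡ c [MOD m] := (ZMod.natCast_eq_natCast_iff _ _ _).mp hcast
  have hmod2 := hmod.mul_right' g
  rw [hmg] at hmod2
  have h5 : (((u : ZMod N).val * g : ℕ) : ZMod N) = ((c * g : ℕ) : ZMod N) :=
    (ZMod.natCast_eq_natCast_iff _ _ _).mpr hmod2
  have hua : (u : ZMod N) * ((g : ℕ) : ZMod N) = a := by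
    push_cast at h5
    rw [ZMod.natCast_val, ZMod.cast_id] at h5
    rw [h5, ← hval, hcg]
    push_cast
    ring
  calc x a = x ((u : ZMod N) * ((g : ℕ) : ZMod N)) := by rw [hua]
    _ = x ((g : ℕ) : ZMod N) := hx u _


private lemma ord_mul_div {N d : ℕ} (hN : N ≠ 0) (hd : d ∣ N) (k : ℕ) :
    addOrderOf ((k * (N / d) : ℕ) : ZMod N) = d / Nat.gcd d k := by
  obtain ⟨q, rfl⟩ := hd
  have hd0 : 0 < d := by
    rcases Nat.eq_zero_or_pos d with h | h
    · subst h; simp at hN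
    · exact h
  have hq : 0 < q := by
    rcases Nat.eq_zero_or_pos q with h | h
    · subst h; simp at hN
    · exact h
  rw [ZMod.addOrderOf_coe _ hN, Nat.mul_div_cancel_left q hd0, Nat.gcd_mul_right,
    Nat.mul_div_mul_right _ _ hq]

private lemma phiMap_eq {N : ℕ} (hN : 2 ≤ N) (x : ZMod N → ℚ) (F : ℕ → ℚ)
    (hx : ∀ a, x a = F (addOrderOf a)) {d : ℕ} (hd : d ∣ N) :
    PhiMap N x d = ∑ e ∈ d.divisors, (Nat.totient e : ℚ) * F e := by
  have hd0 : 0 < d := Nat.pos_of_dvd_of_pos hd (by omega)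
  rw [PhiMap,
    Finset.sum_congr rfl (fun k _ => by rw [hx, ord_mul_div (by omega : N ≠ 0) hd k])]
  exact sum_gcd_eq d hd0 F


/-- `Φ` maps the space `V` of functions satisfying the distribution conditions into
`Hom(Div(N),ℚ)` and is surjective onto it; moreover its restriction to the
`(ℤ/Nℤ)ˣ`-invariant part of `V` is a bijection onto `Hom(Div(N),ℚ)` (i.e. for every
additive `ρ` there is a unique invariant `x ∈ V` with `Φ(x) = ρ` on divisors of `N`). -/
theorem statement_19 (N : ℕ) (hN : 2 ≤ N) :
    (∀ x : ZMod N → ℚ, DistCond N x → AddOnDiv N (PhiMap N x)) ∧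
    (∀ ρ : ℕ → ℚ, AddOnDiv N ρ →
      ∃ x : ZMod N → ℚ, DistCond N x ∧ ∀ d : ℕ, d ∣ N → PhiMap N x d = ρ d) ∧
    (∀ ρ : ℕ → ℚ, AddOnDiv N ρ →
      ∃! x : ZMod N → ℚ,
        (DistCond N x ∧ InvCond N x) ∧ ∀ d : ℕ, d ∣ N → PhiMap N x d = ρ d) := by
  have hN0 : 0 < N := by omega
  -- Part 1
  have part1 : ∀ x : ZMod N → ℚ, DistCond N x → AddOnDiv N (PhiMap N x) := by
    intro x hx d₁ d₂ h1 h2 h12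
    obtain ⟨hx0, hxneg, hxc⟩ := hx
    have hd₁ : 0 < d₁ := Nat.pos_of_dvd_of_pos h1 hN0
    have hd₂ : 0 < d₂ := Nat.pos_of_dvd_of_pos h2 hN0
    set M := N / (d₁ * d₂) with hMdef
    have hMeq : (d₁ * d₂) * M = N := Nat.mul_div_cancel' h12
    have hMpos : 0 < M := by
      rcases Nat.eq_zero_or_pos M with h | h
      · rw [h, Nat.mul_zero] at hMeq; omega
      · exact h
    have hNd₁ : N / d₁ = d₂ * M := by
      rw [show N = d₁ * (d₂ * M) by rw [← hMeq]; ring, Nat.mul_div_cancel_left _ hd₁]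
    have hNd₂ : N / d₂ = d₁ * M := by
      rw [show N = d₂ * (d₁ * M) by rw [← hMeq]; ring, Nat.mul_div_cancel_left _ hd₂]
    have hT : ∀ j ∈ Finset.range d₂,
        (∑ k ∈ Finset.range d₁, x ((j * M + k * (d₂ * M) : ℕ) : ZMod N))
          = x ((j * (N / d₂) : ℕ) : ZMod N) + (if j = 0 then PhiMap N x d₁ else 0) := by
      intro j hj
      rw [Finset.mem_range] at hj
      rcases Nat.eq_zero_or_pos j with hj0 | hj0
      · subst hj0
        rw [if_pos rfl, PhiMap]
        simp only [Nat.zero_mul, Nat.zero_add, Nat.cast_zero]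
        rw [hx0, zero_add]
        refine Finset.sum_congr rfl fun k _ => ?_
        rw [hNd₁]
      · rw [if_neg hj0.ne']
        have hrel := hxc d₁ (d₂ * M) hd₁ (by rw [← hMeq]; ring) (j * M)
          (Nat.mul_pos hj0 hMpos)
          (by
            have h5 : (j + 1) * M ≤ d₂ * M := Nat.mul_le_mul (by omega) le_rfl
            rw [Nat.add_mul, Nat.one_mul] at h5
            omega)
        rw [← hrel, add_zero, hNd₂, show d₁ * (j * M) = j * (d₁ * M) by ring]
    have hmain : PhiMap N x (d₁ * d₂) = ∑ j ∈ Finset.range d₂, ∑ k ∈ Finset.range d₁,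
        x ((j * M + k * (d₂ * M) : ℕ) : ZMod N) := by
      rw [PhiMap, ← hMdef, show d₁ * d₂ = d₂ * d₁ by ring,
        sum_range_mul' d₂ d₁ (fun r => x ((r * M : ℕ) : ZMod N))]
      refine Finset.sum_congr rfl fun j _ => Finset.sum_congr rfl fun k _ => ?_
      rw [show (j + k * d₂) * M = j * M + k * (d₂ * M) by ring]
    rw [hmain, Finset.sum_congr rfl hT, Finset.sum_add_distrib,
      Finset.sum_ite_eq' (Finset.range d₂) 0 (fun _ => PhiMap N x d₁),
      if_pos (Finset.mem_range.mpr hd₂), add_comm]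
    rfl
  -- common constructions
  have hdist : ∀ ρ : ℕ → ℚ, DistCond N (xF N ρ) := by
    intro ρ
    refine ⟨?_, ?_, ?_⟩
    · show fF ρ (addOrderOf (0 : ZMod N)) = 0
      rw [addOrderOf_zero, fF_one]
    · intro a
      show fF ρ (addOrderOf (-a)) = fF ρ (addOrderOf a)
      rw [addOrderOf_neg]
    · intro d N' _ hfact a' ha1 ha2
      exact RelD.all hN (fun p hp => relD_prime hN ρ hp) d N' hfact a' ha1 ha2
  have hinv : ∀ ρ : ℕ → ℚ, InvCond N (xF N ρ) := by
    intro ρ u a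
    show fF ρ (addOrderOf ((u : ZMod N) * a)) = fF ρ (addOrderOf a)
    rw [addOrderOf_unit_mul]
  have hphi : ∀ ρ : ℕ → ℚ, AddOnDiv N ρ → ∀ d, d ∣ N → PhiMap N (xF N ρ) d = ρ d := by
    intro ρ hρ d hd
    rw [phiMap_eq hN (xF N ρ) (fF ρ) (fun a => rfl) hd, ← lam_sum hN hρ d hd]
    refine Finset.sum_congr rfl fun e he => ?_
    have he0 : 0 < e := Nat.pos_of_mem_divisors he
    have ht : (Nat.totient e : ℚ) ≠ 0 := by
      exact_mod_cast (Nat.totient_pos.mpr he0).ne'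
    rw [fF, mul_comm, div_mul_cancel₀ _ ht]
  -- uniqueness of invariant solutions
  have uniq : ∀ y₁ y₂ : ZMod N → ℚ, InvCond N y₁ → InvCond N y₂ →
      (∀ d, d ∣ N → PhiMap N y₁ d = PhiMap N y₂ d) → y₁ = y₂ := by
    intro y₁ y₂ h1 h2 hφ
    set z : ZMod N → ℚ := fun a => y₁ a - y₂ a with hzdef
    have hzinv : ∀ u : (ZMod N)ˣ, ∀ a, z ((u : ZMod N) * a) = z a := by
      intro u a
      simp only [hzdef, h1 u a, h2 u a]
    set F : ℕ → ℚ := fun m => z ((N / m : ℕ) : ZMod N) with hFdef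
    have hzF : ∀ a, z a = F (addOrderOf a) := fun a => inv_rep hN hzinv a
    have hphiz : ∀ d, d ∣ N → ∑ e ∈ d.divisors, (Nat.totient e : ℚ) * F e = 0 := by
      intro d hd
      rw [← phiMap_eq hN z F hzF hd]
      have hsub : PhiMap N z d = PhiMap N y₁ d - PhiMap N y₂ d := by
        rw [PhiMap, PhiMap, PhiMap, ← Finset.sum_sub_distrib]
      rw [hsub, hφ d hd, sub_self]
    have hF0 : ∀ d, d ∣ N → F d = 0 := by
      intro d
      induction d using Nat.strong_induction_on with
      | _ d ih =>
        intro hdN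
        have hd0 : 0 < d := Nat.pos_of_dvd_of_pos hdN hN0
        have hsum := hphiz d hdN
        rw [← Finset.sum_erase_add _ _ (Nat.mem_divisors_self d hd0.ne')] at hsum
        have hz2 : ∑ e ∈ d.divisors.erase d, (Nat.totient e : ℚ) * F e = 0 := by
          refine Finset.sum_eq_zero fun e he => ?_
          have he' := Finset.mem_of_mem_erase he
          have hne := Finset.ne_of_mem_erase he
          have hed : e ∣ d := Nat.dvd_of_mem_divisors he'
          have helt : e < d := Nat.lt_of_le_of_ne (Nat.le_of_dvd hd0 hed) hne
          rw [ih e helt (dvd_trans hed hdN), mul_zero]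
        rw [hz2, zero_add] at hsum
        have htpos : (Nat.totient d : ℚ) ≠ 0 := by
          exact_mod_cast (Nat.totient_pos.mpr hd0).ne'
        exact (mul_eq_zero.mp hsum).resolve_left htpos
    have hz0 : ∀ a, z a = 0 := fun a => by
      rw [hzF a, hF0 _ (addOrderOf_dvd_N a)]
    funext a
    have := hz0 a
    simp only [hzdef] at this
    linarith
  refine ⟨part1, ?_, ?_⟩
  · intro ρ hρ
    exact ⟨xF N ρ, hdist ρ, hphi ρ hρ⟩
  · intro ρ hρ
    refine ⟨xF N ρ, ⟨⟨hdist ρ, hinv ρ⟩, hphi ρ hρ⟩, ?_⟩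
    rintro y ⟨⟨hyd, hyinv⟩, hyphi⟩
    exact uniq y (xF N ρ) hyinv (hinv ρ) (fun d hd => by rw [hyphi d hd, hphi ρ hρ d hd])
end
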